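/- arXiv:2405.02215 — 8 statements merged into one kernel-verified Lean document; each statement's English description precedes it below -/
import Mathlib

section
/- Under the hypotheses and conclusion of the L¹-stability estimate ‖ρ¹(t)−ρ²(t)‖_{L¹} ≤ (|y₀¹−y₀²| TV(ρ₀¹) + ‖ρ₀¹−ρ₀²‖_{L¹}) e^{αt}, the vehicle positions satisfy |y¹(t)−y²(t)| ≤ |y₀¹−y₀²| + (β|y₀¹−y₀²| + γ‖ρ₀¹−ρ₀²‖_{L¹})(e^{αt} − 1), where α = (2‖Q'‖_∞+2R+C)‖ω'‖_∞‖μ‖_∞, β = TV(ρ₀¹)/(2‖Q'‖_∞+2R+C), γ = 1/(2‖Q'‖_∞+2R+C). -/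
open MeasureTheory Set Filter Topology

/-- Position estimate of Theorem `BVRS_uniqueness`: given the exponential L¹ bound on
`u t = ‖ρ¹(t)−ρ²(t)‖_{L¹}` and `|ẏ¹−ẏ²| ≤ ‖ω'‖_∞‖μ‖_∞ u` a.e., the positions
`y^i(t) = y₀^i + ∫₀ᵗ ẏ^i` satisfy
`|y¹(t)−y²(t)| ≤ |y₀¹−y₀²| + (β|y₀¹−y₀²| + γ‖ρ₀¹−ρ₀²‖_{L¹})(e^{αt} − 1)`,
with `α = D·‖ω'‖_∞‖μ‖_∞`, `β = TV(ρ₀¹)/D`, `γ = 1/D`, `D = 2‖Q'‖_∞+2R+C`. -/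
theorem stmt_4
    (T C R normQ' normω' normμ TV1 Δ₀ : ℝ) (y01 y02 : ℝ)
    (hT : 0 ≤ T) (hC : 0 ≤ C) (hR : 0 < R) (hQ : 0 ≤ normQ')
    (hω' : 0 ≤ normω') (hμ : 0 ≤ normμ) (hTV1 : 0 ≤ TV1) (hΔ₀ : 0 ≤ Δ₀)
    (u v1 v2 : ℝ → ℝ) (y1 y2 : ℝ → ℝ)
    (hu_nonneg : ∀ t ∈ Icc (0:ℝ) T, 0 ≤ u t)
    (hv1 : IntegrableOn v1 (Icc 0 T)) (hv2 : IntegrableOn v2 (Icc 0 T))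
    (hy1 : ∀ t ∈ Icc (0:ℝ) T, y1 t = y01 + ∫ s in (0:ℝ)..t, v1 s)
    (hy2 : ∀ t ∈ Icc (0:ℝ) T, y2 t = y02 + ∫ s in (0:ℝ)..t, v2 s)
    (hv : ∀ᵐ s : ℝ, s ∈ Icc (0:ℝ) T → |v1 s - v2 s| ≤ normω' * normμ * u s)
    (hu : ∀ t ∈ Icc (0:ℝ) T,
      u t ≤ (|y01 - y02| * TV1 + Δ₀)
        * Real.exp (((2*normQ' + 2*R + C) * (normω' * normμ)) * t)) :
    ∀ t ∈ Icc (0:ℝ) T,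
      |y1 t - y2 t| ≤ |y01 - y02|
        + ((TV1 / (2*normQ' + 2*R + C)) * |y01 - y02|
            + (1 / (2*normQ' + 2*R + C)) * Δ₀)
          * (Real.exp (((2*normQ' + 2*R + C) * (normω' * normμ)) * t) - 1) := by
  intro t ht
  obtain ⟨ht0, htT⟩ := ht
  have hDpos : 0 < 2*normQ' + 2*R + C := by linarith
  set D : ℝ := 2*normQ' + 2*R + C with hDdef
  set K : ℝ := normω' * normμ with hKdef
  have hKnn : 0 ≤ K := mul_nonneg hω' hμ
  set M : ℝ := |y01 - y02| * TV1 + Δ₀ with hMdef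
  have hMnn : 0 ≤ M := add_nonneg (mul_nonneg (abs_nonneg _) hTV1) hΔ₀
  have hsub : Icc (0:ℝ) t ⊆ Icc 0 T := Icc_subset_Icc le_rfl htT
  have huicc : uIcc (0:ℝ) t = Icc 0 t := uIcc_of_le ht0
  have hv1' : IntervalIntegrable v1 volume 0 t := by
    rw [intervalIntegrable_iff_integrableOn_Icc_of_le ht0]
    exact hv1.mono_set hsub
  have hv2' : IntervalIntegrable v2 volume 0 t := by
    rw [intervalIntegrable_iff_integrableOn_Icc_of_le ht0]
    exact hv2.mono_set hsub
  rw [hy1 t ⟨ht0, htT⟩, hy2 t ⟨ht0, htT⟩]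
  have hsplit : y01 + (∫ s in (0:ℝ)..t, v1 s) - (y02 + ∫ s in (0:ℝ)..t, v2 s)
      = (y01 - y02) + ∫ s in (0:ℝ)..t, (v1 s - v2 s) := by
    rw [intervalIntegral.integral_sub hv1' hv2']; ring
  rw [hsplit]
  have hI : |∫ s in (0:ℝ)..t, (v1 s - v2 s)| ≤ (M / D) * (Real.exp (D * K * t) - 1) := by
    have hae : ∀ᵐ s ∂(volume.restrict (Icc (0:ℝ) t)),
        |v1 s - v2 s| ≤ K * M * Real.exp (D * K * s) := by
      filter_upwards [ae_restrict_of_ae hv, ae_restrict_mem measurableSet_Icc] with s h1 h2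
      have hsT : s ∈ Icc (0:ℝ) T := hsub h2
      calc |v1 s - v2 s| ≤ K * u s := h1 hsT
        _ ≤ K * (M * Real.exp (D*K*s)) := mul_le_mul_of_nonneg_left (hu s hsT) hKnn
        _ = K * M * Real.exp (D*K*s) := by ring
    have habs : IntervalIntegrable (fun s => |v1 s - v2 s|) volume 0 t := (hv1'.sub hv2').abs
    have hgint : IntervalIntegrable (fun s => K * M * Real.exp (D*K*s)) volume 0 t := by
      apply Continuous.intervalIntegrable
      continuity
    have h1 : |∫ s in (0:ℝ)..t, (v1 s - v2 s)| ≤ ∫ s in (0:ℝ)..t, |v1 s - v2 s| :=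
      intervalIntegral.abs_integral_le_integral_abs ht0
    have h2 : (∫ s in (0:ℝ)..t, |v1 s - v2 s|) ≤ ∫ s in (0:ℝ)..t, K * M * Real.exp (D*K*s) :=
      intervalIntegral.integral_mono_ae_restrict ht0 habs hgint hae
    have h3 : (∫ s in (0:ℝ)..t, K * M * Real.exp (D*K*s)) = (M / D) * (Real.exp (D * K * t) - 1) := by
      rcases hKnn.eq_or_lt with hK0 | hKpos
      · simp [← hK0]
      · have hc : D * K ≠ 0 := by positivity
        have := intervalIntegral.integral_comp_mul_left (a := (0:ℝ)) (b := t)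
          (fun x => Real.exp x) hc
        simp only [mul_zero] at this
        rw [intervalIntegral.integral_const_mul, this, integral_exp, Real.exp_zero,
          smul_eq_mul]
        field_simp
    linarith
  calc |(y01 - y02) + ∫ s in (0:ℝ)..t, (v1 s - v2 s)|
      ≤ |y01 - y02| + |∫ s in (0:ℝ)..t, (v1 s - v2 s)| := abs_add_le _ _
    _ ≤ |y01 - y02| + (M / D) * (Real.exp (D * K * t) - 1) := by linarith
    _ = |y01 - y02| + ((TV1 / D) * |y01 - y02| + (1 / D) * Δ₀)
          * (Real.exp (D * K * t) - 1) := by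
        rw [hMdef]
        have : (|y01 - y02| * TV1 + Δ₀) / D = TV1 / D * |y01 - y02| + 1 / D * Δ₀ := by
          field_simp
        rw [this]
end

section
/- Let (μ^ℓ) ⊂ L¹(ℝ, ℝ⁺) converge weakly in L¹ to μ (i.e. ∫ g μ^ℓ → ∫ g μ for every g ∈ L∞). Let (ρ^ℓ) be uniformly bounded by R and converge a.e. on ℝ×(0,T) to ρ. Then for a.e. t ∈ (0,T), ∫_ℝ ρ^ℓ(x,t) μ^ℓ(x) dx → ∫_ℝ ρ(x,t) μ(x) dx. -/
open MeasureTheory Set Filter Topology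

-- tail infimum converges
lemma tendsto_iInf_tail {u : ℕ → ℝ} {c C : ℝ} (hb : ∀ n, -C ≤ u n)
    (h : Tendsto u atTop (𝓝 c)) :
    Tendsto (fun N => ⨅ n, u (N + n)) atTop (𝓝 c) := by
  rw [Metric.tendsto_atTop] at h ⊢
  intro ε hε
  obtain ⟨N0, hN0⟩ := h (ε / 2) (by linarith)
  refine ⟨N0, fun N hN => ?_⟩
  have hbdd : ∀ N : ℕ, BddBelow (range fun n => u (N + n)) := by
    intro N
    exact ⟨-C, by rintro y ⟨n, rfl⟩; exact hb _⟩
  have h1 : c - ε / 2 ≤ ⨅ n, u (N + n) := by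
    apply le_ciInf
    intro n
    have := hN0 (N + n) (le_trans hN (Nat.le_add_right _ _))
    rw [Real.dist_eq] at this
    have := abs_lt.1 this
    linarith [this.1]
  have h2 : (⨅ n, u (N + n)) ≤ u (N + 0) := ciInf_le (hbdd N) 0
  have := hN0 (N + 0) (le_trans hN (Nat.le_add_right _ _))
  rw [Real.dist_eq] at this
  have h3 := abs_lt.1 this
  rw [Real.dist_eq, abs_lt]
  constructor <;> linarith [h3.2]

lemma tendsto_iSup_tail {u : ℕ → ℝ} {c C : ℝ} (hb : ∀ n, u n ≤ C)
    (h : Tendsto u atTop (𝓝 c)) :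
    Tendsto (fun N => ⨆ n, u (N + n)) atTop (𝓝 c) := by
  have hb' : ∀ n, -C ≤ (fun n => -u n) n := fun n => by simpa using hb n
  have := tendsto_iInf_tail hb' h.neg
  have heq : (fun N => ⨆ n, u (N + n)) = fun N => -(⨅ n, -u (N + n)) := by
    funext N
    have hbA : BddAbove (range fun n => u (N + n)) := ⟨C, by rintro y ⟨n, rfl⟩; exact hb _⟩
    have hbB : BddBelow (range fun n => -u (N + n)) := ⟨-C, by rintro y ⟨n, rfl⟩; simpa using hb _⟩
    apply le_antisymm
    · apply ciSup_le
      intro n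
      have : (⨅ m, -u (N + m)) ≤ -u (N + n) := ciInf_le hbB n
      linarith
    · rw [neg_le]
      apply le_ciInf
      intro n
      have : u (N + n) ≤ ⨆ m, u (N + m) := le_ciSup hbA n
      linarith
  rw [heq]
  simpa using this.neg

lemma integrable_bdd_mul {φ ψ : ℝ → ℝ} {C : ℝ} (hφ : Measurable φ) (hbd : ∀ x, |φ x| ≤ C)
    (hψ : Integrable ψ) : Integrable (fun x => φ x * ψ x) := by
  refine (hψ.abs.const_mul C).mono' (hφ.aestronglyMeasurable.mul hψ.aestronglyMeasurable) ?_
  filter_upwards with x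
  rw [Real.norm_eq_abs, abs_mul]
  exact mul_le_mul_of_nonneg_right (hbd x) (abs_nonneg _)

lemma weak_mul_tendsto (R : ℝ)
    (μℓ : ℕ → ℝ → ℝ) (μ : ℝ → ℝ)
    (hμℓpos : ∀ l x, 0 ≤ μℓ l x) (hμℓint : ∀ l, Integrable (μℓ l))
    (hμint : Integrable μ)
    (hweak : ∀ g : ℝ → ℝ, Measurable g → (∃ M, ∀ x, |g x| ≤ M) →
      Tendsto (fun l => ∫ x, g x * μℓ l x) atTop (𝓝 (∫ x, g x * μ x)))
    (f : ℕ → ℝ → ℝ) (g : ℝ → ℝ)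
    (hfmeas : ∀ l, Measurable (f l))
    (hfbd : ∀ l x, |f l x| ≤ R)
    (hconv : ∀ᵐ x : ℝ, Tendsto (fun l => f l x) atTop (𝓝 (g x))) :
    Tendsto (fun l => ∫ x, f l x * μℓ l x) atTop (𝓝 (∫ x, g x * μ x)) := by
  set L := ∫ x, g x * μ x with hL
  set h : ℕ → ℝ → ℝ := fun N x => ⨅ n, f (N + n) x with hhdef
  set k : ℕ → ℝ → ℝ := fun N x => ⨆ n, f (N + n) x with hkdef
  have hmeas_h : ∀ N, Measurable (h N) := fun N => Measurable.iInf (fun n => hfmeas _)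
  have hmeas_k : ∀ N, Measurable (k N) := fun N => Measurable.iSup (fun n => hfmeas _)
  have hbddB : ∀ N x, BddBelow (range fun n => f (N + n) x) := fun N x =>
    ⟨-R, by rintro y ⟨n, rfl⟩; exact (abs_le.1 (hfbd _ _)).1⟩
  have hbddA : ∀ N x, BddAbove (range fun n => f (N + n) x) := fun N x =>
    ⟨R, by rintro y ⟨n, rfl⟩; exact (abs_le.1 (hfbd _ _)).2⟩
  have hhbd : ∀ N x, |h N x| ≤ R := by
    intro N x
    rw [abs_le]
    constructor
    · exact le_ciInf fun n => (abs_le.1 (hfbd _ _)).1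
    · exact (ciInf_le (hbddB N x) 0).trans (abs_le.1 (hfbd _ _)).2
  have hkbd : ∀ N x, |k N x| ≤ R := by
    intro N x
    rw [abs_le]
    constructor
    · exact ((abs_le.1 (hfbd (N + 0) x)).1).trans (le_ciSup (hbddA N x) 0)
    · exact ciSup_le fun n => (abs_le.1 (hfbd _ _)).2
  have hhle : ∀ N l, N ≤ l → ∀ x, h N x ≤ f l x := by
    intro N l hNl x
    have : h N x ≤ f (N + (l - N)) x := ciInf_le (hbddB N x) (l - N)
    rwa [Nat.add_sub_cancel' hNl] at this
  have hkge : ∀ N l, N ≤ l → ∀ x, f l x ≤ k N x := by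
    intro N l hNl x
    have : f (N + (l - N)) x ≤ k N x := le_ciSup (hbddA N x) (l - N)
    rwa [Nat.add_sub_cancel' hNl] at this
  have hDCh : Tendsto (fun N => ∫ x, h N x * μ x) atTop (𝓝 L) := by
    apply tendsto_integral_of_dominated_convergence (fun x => R * |μ x|)
    · exact fun N => (hmeas_h N).aestronglyMeasurable.mul hμint.aestronglyMeasurable
    · exact hμint.abs.const_mul R
    · intro N
      filter_upwards with x
      rw [Real.norm_eq_abs, abs_mul]
      exact mul_le_mul_of_nonneg_right (hhbd N x) (abs_nonneg _)
    · filter_upwards [hconv] with x hx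
      exact (tendsto_iInf_tail (fun n => (abs_le.1 (hfbd n x)).1) hx).mul_const (μ x)
  have hDCk : Tendsto (fun N => ∫ x, k N x * μ x) atTop (𝓝 L) := by
    apply tendsto_integral_of_dominated_convergence (fun x => R * |μ x|)
    · exact fun N => (hmeas_k N).aestronglyMeasurable.mul hμint.aestronglyMeasurable
    · exact hμint.abs.const_mul R
    · intro N
      filter_upwards with x
      rw [Real.norm_eq_abs, abs_mul]
      exact mul_le_mul_of_nonneg_right (hkbd N x) (abs_nonneg _)
    · filter_upwards [hconv] with x hx
      exact (tendsto_iSup_tail (fun n => (abs_le.1 (hfbd n x)).2) hx).mul_const (μ x)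
  rw [tendsto_order]
  constructor
  · intro a ha
    obtain ⟨N, hN⟩ := (hDCh.eventually (eventually_gt_nhds ha)).exists
    have hw := hweak (h N) (hmeas_h N) ⟨R, hhbd N⟩
    have hev : ∀ᶠ l in atTop, a < ∫ x, h N x * μℓ l x := hw.eventually (eventually_gt_nhds hN)
    filter_upwards [hev, eventually_ge_atTop N] with l hl hNl
    refine hl.trans_le ?_
    refine integral_mono (integrable_bdd_mul (hmeas_h N) (hhbd N) (hμℓint l))
      (integrable_bdd_mul (hfmeas l) (hfbd l) (hμℓint l)) fun x => ?_
    exact mul_le_mul_of_nonneg_right (hhle N l hNl x) (hμℓpos l x)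
  · intro a ha
    obtain ⟨N, hN⟩ := (hDCk.eventually (eventually_lt_nhds ha)).exists
    have hw := hweak (k N) (hmeas_k N) ⟨R, hkbd N⟩
    have hev : ∀ᶠ l in atTop, (∫ x, k N x * μℓ l x) < a := hw.eventually (eventually_lt_nhds hN)
    filter_upwards [hev, eventually_ge_atTop N] with l hl hNl
    refine lt_of_le_of_lt ?_ hl
    refine integral_mono (integrable_bdd_mul (hfmeas l) (hfbd l) (hμℓint l))
      (integrable_bdd_mul (hmeas_k N) (hkbd N) (hμℓint l)) fun x => ?_
    exact mul_le_mul_of_nonneg_right (hkge N l hNl x) (hμℓpos l x)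


/-- Key convergence `AWS_stability_convergence`: if `μ^ℓ ⇀ μ` weakly in `L¹` (tested
against every bounded measurable function), `ρ^ℓ` is uniformly bounded by `R` and
converges a.e. on `ℝ×(0,T)` to `ρ`, then for a.e. `t ∈ (0,T)`,
`∫ ρ^ℓ(x,t) μ^ℓ(x) dx → ∫ ρ(x,t) μ(x) dx`. -/
theorem stmt_7
    (T R : ℝ) (hT : 0 < T) (hR : 0 < R)
    (μℓ : ℕ → ℝ → ℝ) (μ : ℝ → ℝ)
    (hμℓpos : ∀ l x, 0 ≤ μℓ l x) (hμℓint : ∀ l, Integrable (μℓ l))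
    (hμint : Integrable μ)
    (hweak : ∀ g : ℝ → ℝ, Measurable g → (∃ M, ∀ x, |g x| ≤ M) →
      Tendsto (fun l => ∫ x, g x * μℓ l x) atTop (𝓝 (∫ x, g x * μ x)))
    (ρℓ : ℕ → ℝ → ℝ → ℝ) (ρ : ℝ → ℝ → ℝ)
    (hρℓmeas : ∀ l, Measurable (Function.uncurry (ρℓ l)))
    (hρmeas : Measurable (Function.uncurry ρ))
    (hρℓbd : ∀ l x t, |ρℓ l x t| ≤ R)
    (hρbd : ∀ x t, |ρ x t| ≤ R)
    (hae : ∀ᵐ p : ℝ × ℝ ∂(volume.restrict (Set.univ ×ˢ Ioo 0 T)),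
      Tendsto (fun l => ρℓ l p.1 p.2) atTop (𝓝 (ρ p.1 p.2))) :
    ∀ᵐ t : ℝ, t ∈ Ioo (0:ℝ) T →
      Tendsto (fun l => ∫ x, ρℓ l x t * μℓ l x) atTop (𝓝 (∫ x, ρ x t * μ x)) := by
  have hmeq : (volume : Measure ℝ).prod (volume.restrict (Ioo 0 T))
      = (volume : Measure (ℝ × ℝ)).restrict (Set.univ ×ˢ Ioo 0 T) := by
    rw [Measure.volume_eq_prod, ← Measure.prod_restrict, Measure.restrict_univ]
  rw [← hmeq] at hae
  have hae3 : ∀ᵐ q : ℝ × ℝ ∂((volume.restrict (Ioo 0 T)).prod volume),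
      Tendsto (fun l => ρℓ l q.2 q.1) atTop (𝓝 (ρ q.2 q.1)) :=
    (Measure.measurePreserving_swap).quasiMeasurePreserving.tendsto_ae.eventually hae
  have hae4 : ∀ᵐ t : ℝ ∂(volume.restrict (Ioo 0 T)), ∀ᵐ x : ℝ,
      Tendsto (fun l => ρℓ l x t) atTop (𝓝 (ρ x t)) := Measure.ae_ae_of_ae_prod hae3
  have key : ∀ᵐ t : ℝ ∂(volume.restrict (Ioo 0 T)),
      Tendsto (fun l => ∫ x, ρℓ l x t * μℓ l x) atTop (𝓝 (∫ x, ρ x t * μ x)) := by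
    filter_upwards [hae4] with t ht
    exact weak_mul_tendsto R μℓ μ hμℓpos hμℓint hμint hweak
      (fun l x => ρℓ l x t) (fun x => ρ x t)
      (fun l => (hρℓmeas l).comp (measurable_id.prodMk measurable_const))
      (fun l x => hρℓbd l x t) ht
  exact ae_imp_of_ae_restrict key
end

section
/- Monotonicity and L∞ stability of the constrained finite volume scheme: under the CFL condition λ·L ≤ 1, the update H_j^{n+1}(a,b,c) = b − λ(F_{j+1}^{n+1}(b,c) − F_j^{n+1}(a,b)), where F_j^{n+1} is a monotone consistent Lipschitz numerical flux possibly capped by min{·, q^{n+1}} at j = 0, is nondecreasing in each of its three arguments, and since H_j^{n+1}(0,0,0) = 0 and H_j^{n+1}(R,R,R) = R, initial data in [0,R] yield ρ_{j+1/2}^n ∈ [0,R] for all n, j. -/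
open Set

/-- Monotonicity and L∞ stability of the constrained finite volume scheme: under the CFL
condition `λ(L₁+L₂) ≤ 1`, the update
`H_j^{n+1}(a,b,c) = b − λ(G_{j+1}^n(b,c) − G_j^n(a,b))` built from monotone consistent
Lipschitz numerical fluxes (possibly capped at the interface) is nondecreasing in each of
its three arguments; since `H(0,0,0) = 0` and `H(R,R,R) = R`, initial data in `[0,R]`
yield `ρ_j^n ∈ [0,R]` for all `n, j`. -/
theorem stmt_8
    (R lam L₁ L₂ : ℝ) (hR : 0 < R) (hlam : 0 < lam)
    (hL₁ : 0 ≤ L₁) (hL₂ : 0 ≤ L₂)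
    (G : ℕ → ℤ → ℝ → ℝ → ℝ)
    (hmono1 : ∀ n j b, Monotone (fun a => G n j a b))
    (hmono2 : ∀ n j a, Antitone (fun b => G n j a b))
    (hlip1 : ∀ n j a a' b, |G n j a b - G n j a' b| ≤ L₁ * |a - a'|)
    (hlip2 : ∀ n j a b b', |G n j a b - G n j a b'| ≤ L₂ * |b - b'|)
    (hCFL : lam * (L₁ + L₂) ≤ 1)
    (hstat0 : ∀ n j j', G n j 0 0 = G n j' 0 0)
    (hstatR : ∀ n j j', G n j R R = G n j' R R)
    (ρ : ℕ → ℤ → ℝ)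
    (hscheme : ∀ n j, ρ (n+1) j
      = ρ n j - lam * (G n (j+1) (ρ n j) (ρ n (j+1)) - G n j (ρ n (j-1)) (ρ n j)))
    (hinit : ∀ j, ρ 0 j ∈ Icc 0 R) :
    (∀ n j a a' b c, a ≤ a' →
      b - lam * (G n (j+1) b c - G n j a b) ≤ b - lam * (G n (j+1) b c - G n j a' b)) ∧
    (∀ n j a b b' c, b ≤ b' →
      b - lam * (G n (j+1) b c - G n j a b) ≤ b' - lam * (G n (j+1) b' c - G n j a b')) ∧
    (∀ n j a b c c', c ≤ c' →
      b - lam * (G n (j+1) b c - G n j a b) ≤ b - lam * (G n (j+1) b c' - G n j a b)) ∧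
    (∀ n j, (0:ℝ) - lam * (G n (j+1) 0 0 - G n j 0 0) = 0) ∧
    (∀ n j, R - lam * (G n (j+1) R R - G n j R R) = R) ∧
    (∀ n j, ρ n j ∈ Icc 0 R) := by
  have h1 : ∀ n j a a' b c, a ≤ a' →
      b - lam * (G n (j+1) b c - G n j a b) ≤ b - lam * (G n (j+1) b c - G n j a' b) := by
    intro n j a a' b c h
    have := hmono1 n j b h
    simp only at this
    nlinarith
  have h3 : ∀ n j a b c c', c ≤ c' →
      b - lam * (G n (j+1) b c - G n j a b) ≤ b - lam * (G n (j+1) b c' - G n j a b) := by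
    intro n j a b c c' h
    have := hmono2 n (j+1) b h
    simp only at this
    nlinarith
  have h2 : ∀ n j a b b' c, b ≤ b' →
      b - lam * (G n (j+1) b c - G n j a b) ≤ b' - lam * (G n (j+1) b' c - G n j a b') := by
    intro n j a b b' c h
    have m1 : G n (j+1) b c ≤ G n (j+1) b' c := hmono1 n (j+1) c h
    have m2 : G n j a b' ≤ G n j a b := hmono2 n j a h
    have l1 : |G n (j+1) b' c - G n (j+1) b c| ≤ L₁ * |b' - b| := hlip1 n (j+1) b' b c
    have l2 : |G n j a b - G n j a b'| ≤ L₂ * |b - b'| := hlip2 n j a b b'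
    rw [abs_of_nonneg (by linarith), abs_of_nonneg (by linarith)] at l1
    rw [abs_of_nonneg (by linarith), abs_of_nonpos (by linarith)] at l2
    nlinarith
  have h4 : ∀ n j, (0:ℝ) - lam * (G n (j+1) 0 0 - G n j 0 0) = 0 := by
    intro n j; rw [hstat0 n (j+1) j]; ring
  have h5 : ∀ n j, R - lam * (G n (j+1) R R - G n j R R) = R := by
    intro n j; rw [hstatR n (j+1) j]; ring
  refine ⟨h1, h2, h3, h4, h5, ?_⟩
  intro n
  induction n with
  | zero => exact hinit
  | succ n ih =>
    intro j
    rw [hscheme n j]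
    obtain ⟨ha0, haR⟩ := ih (j-1)
    obtain ⟨hb0, hbR⟩ := ih j
    obtain ⟨hc0, hcR⟩ := ih (j+1)
    constructor
    · calc (0:ℝ) = 0 - lam * (G n (j+1) 0 0 - G n j 0 0) := (h4 n j).symm
        _ ≤ 0 - lam * (G n (j+1) 0 (ρ n (j+1)) - G n j 0 0) := h3 n j 0 0 0 _ hc0
        _ ≤ ρ n j - lam * (G n (j+1) (ρ n j) (ρ n (j+1)) - G n j 0 (ρ n j)) :=
            h2 n j 0 0 (ρ n j) _ hb0
        _ ≤ ρ n j - lam * (G n (j+1) (ρ n j) (ρ n (j+1)) - G n j (ρ n (j-1)) (ρ n j)) :=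
            h1 n j 0 _ _ _ ha0
    · calc ρ n j - lam * (G n (j+1) (ρ n j) (ρ n (j+1)) - G n j (ρ n (j-1)) (ρ n j))
          ≤ ρ n j - lam * (G n (j+1) (ρ n j) (ρ n (j+1)) - G n j R (ρ n j)) :=
            h1 n j _ R _ _ haR
        _ ≤ R - lam * (G n (j+1) R (ρ n (j+1)) - G n j R R) := h2 n j R _ R _ hbR
        _ ≤ R - lam * (G n (j+1) R R - G n j R R) := h3 n j R R _ R hcR
        _ = R := h5 n j
end

section
/- Discrete entropy inequality at the interface cell j = −1: for a monotone scheme with interface flux capped by q^{n+1}, one has H_{−1}^{n+1}(k,k,k) = k + λ 𝓡(k) where 𝓡(k) = F(s^{n+1},k) − min{F(s^{n+1},k), q^{n+1}} ≥ 0, and consequently |ρ_{−1/2}^{n+1} − k| ≤ |ρ_{−1/2}^{n} − k| − λ(Φ₀^n − Φ_{−1}^n) + λ(Φ₀^n − Φ_int^n) + λ𝓡(k) for every k ∈ [0,R], where Φ_j^n = 𝐅(ρ_{j−1/2}^n ∨ k, ρ_{j+1/2}^n ∨ k) − 𝐅(ρ_{j−1/2}^n ∧ k, ρ_{j+1/2}^n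 ∧ k) and Φ_int^n is the analogous expression with the capped flux. -/
open Set

private lemma min_sub_min_le_abs (x y q : ℝ) : min x q - min y q ≤ |x - y| := by
  rcases le_total x q with h | h <;> rcases le_total y q with h' | h' <;>
    rcases abs_cases (x - y) with ⟨h1, h2⟩ | ⟨h1, h2⟩ <;>
    simp [min_eq_left, min_eq_right, h, h'] <;> linarith

private lemma Hmono (lam q L₁ L₂ : ℝ) (hlam : 0 < lam) (hL₁ : 0 ≤ L₁) (hL₂ : 0 ≤ L₂)
    (hCFL : lam * (L₁ + L₂) ≤ 1) (Fl : ℝ → ℝ → ℝ)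
    (hmono1 : ∀ b, Monotone (fun a => Fl a b))
    (hmono2 : ∀ a, Antitone (fun b => Fl a b))
    (hlip1 : ∀ a a' b, |Fl a b - Fl a' b| ≤ L₁ * |a - a'|)
    (hlip2 : ∀ a b b', |Fl a b - Fl a b'| ≤ L₂ * |b - b'|)
    (a a' b b' c c' : ℝ) (haa : a ≤ a') (hbb : b ≤ b') (hcc : c ≤ c') :
    b - lam * (min (Fl b c) q - Fl a b) ≤ b' - lam * (min (Fl b' c') q - Fl a' b') := by
  have s1 : Fl a b ≤ Fl a' b := hmono1 b haa
  have s3 : Fl b' c' ≤ Fl b' c := hmono2 b' hcc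
  have s3' : min (Fl b' c') q ≤ min (Fl b' c) q := min_le_min s3 le_rfl
  have habs : |b' - b| = b' - b := abs_of_nonneg (by linarith)
  have habs' : |b - b'| = b' - b := by rw [abs_sub_comm, habs]
  have f1 : min (Fl b' c) q - min (Fl b c) q ≤ L₁ * (b' - b) := by
    have := (min_sub_min_le_abs (Fl b' c) (Fl b c) q).trans (hlip1 b' b c)
    rwa [habs] at this
  have f2 : Fl a' b - Fl a' b' ≤ L₂ * (b' - b) := by
    have := (le_abs_self _).trans (hlip2 a' b b')
    rwa [habs'] at this
  have m1 : lam * (min (Fl b' c) q - min (Fl b c) q) ≤ lam * (L₁ * (b' - b)) :=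
    mul_le_mul_of_nonneg_left f1 hlam.le
  have m2 : lam * (Fl a' b - Fl a' b') ≤ lam * (L₂ * (b' - b)) :=
    mul_le_mul_of_nonneg_left f2 hlam.le
  have m3 : lam * (L₁ + L₂) * (b' - b) ≤ 1 * (b' - b) :=
    mul_le_mul_of_nonneg_right hCFL (by linarith)
  have m4 : lam * (Fl a b) ≤ lam * (Fl a' b) := mul_le_mul_of_nonneg_left s1 hlam.le
  have m5 : lam * (min (Fl b' c') q) ≤ lam * (min (Fl b' c) q) :=
    mul_le_mul_of_nonneg_left s3' hlam.le
  nlinarith [m1, m2, m3, m4, m5]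

/-- Discrete entropy inequality at the interface cell `j = −1`: with the capped interface
flux, `H_{−1}(k,k,k) = k + λ𝓡(k)` where `𝓡(k) = F(k) − min{F(k), q} ≥ 0`, and
`|ρ_{−1/2}^{n+1} − k| ≤ |ρ_{−1/2}^n − k| − λ(Φ₀ − Φ_{−1}) + λ(Φ₀ − Φ_int) + λ𝓡(k)`.
Here `a = ρ_{−3/2}^n`, `b = ρ_{−1/2}^n`, `c = ρ_{1/2}^n`,
`H_{−1}(a,b,c) = b − λ(min{𝐅(b,c), q} − 𝐅(a,b))`. -/
theorem stmt_9
    (R lam q L₁ L₂ : ℝ) (hR : 0 < R) (hlam : 0 < lam) (hq : 0 ≤ q)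
    (hL₁ : 0 ≤ L₁) (hL₂ : 0 ≤ L₂) (hCFL : lam * (L₁ + L₂) ≤ 1)
    (Fl : ℝ → ℝ → ℝ) (F : ℝ → ℝ)
    (hcons : ∀ r, Fl r r = F r)
    (hmono1 : ∀ b, Monotone (fun a => Fl a b))
    (hmono2 : ∀ a, Antitone (fun b => Fl a b))
    (hlip1 : ∀ a a' b, |Fl a b - Fl a' b| ≤ L₁ * |a - a'|)
    (hlip2 : ∀ a b b', |Fl a b - Fl a b'| ≤ L₂ * |b - b'|)
    (a b c k : ℝ) (ha : a ∈ Icc 0 R) (hb : b ∈ Icc 0 R) (hc : c ∈ Icc 0 R)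
    (hk : k ∈ Icc 0 R) :
    (k - lam * (min (Fl k k) q - Fl k k) = k + lam * (F k - min (F k) q)) ∧
    (0 ≤ F k - min (F k) q) ∧
    (|(b - lam * (min (Fl b c) q - Fl a b)) - k|
      ≤ |b - k|
        - lam * ((Fl (max b k) (max c k) - Fl (min b k) (min c k))
                  - (Fl (max a k) (max b k) - Fl (min a k) (min b k)))
        + lam * ((Fl (max b k) (max c k) - Fl (min b k) (min c k))
                  - (min (Fl (max b k) (max c k)) q - min (Fl (min b k) (min c k)) q))
        + lam * (F k - min (F k) q)) := by
  have hR0 : 0 ≤ F k - min (F k) q := sub_nonneg.2 (min_le_left _ _)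
  refine ⟨by rw [hcons]; ring, hR0, ?_⟩
  set ρ := b - lam * (min (Fl b c) q - Fl a b) with hρ
  set Hu := max b k - lam * (min (Fl (max b k) (max c k)) q - Fl (max a k) (max b k)) with hHu
  set Hd := min b k - lam * (min (Fl (min b k) (min c k)) q - Fl (min a k) (min b k)) with hHd
  have mono := Hmono lam q L₁ L₂ hlam hL₁ hL₂ hCFL Fl hmono1 hmono2 hlip1 hlip2
  have hkkk : k - lam * (min (Fl k k) q - Fl k k) = k + lam * (F k - min (F k) q) := by
    rw [hcons]; ring
  have h1 : max ρ k ≤ Hu := by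
    have hρu : ρ ≤ Hu := mono a (max a k) b (max b k) c (max c k)
      (le_max_left _ _) (le_max_left _ _) (le_max_left _ _)
    have hku : k ≤ Hu := by
      have := mono k (max a k) k (max b k) k (max c k)
        (le_max_right _ _) (le_max_right _ _) (le_max_right _ _)
      have hpos : 0 ≤ lam * (F k - min (F k) q) := mul_nonneg hlam.le hR0
      rw [hkkk] at this; linarith
    exact max_le hρu hku
  have h2 : Hd - lam * (F k - min (F k) q) ≤ min ρ k := by
    have hρd : Hd ≤ ρ := mono (min a k) a (min b k) b (min c k) c
      (min_le_left _ _) (min_le_left _ _) (min_le_left _ _)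
    have hkd : Hd ≤ k + lam * (F k - min (F k) q) := by
      have := mono (min a k) k (min b k) k (min c k) k
        (min_le_right _ _) (min_le_right _ _) (min_le_right _ _)
      rw [hkkk] at this; exact this
    have hpos : 0 ≤ lam * (F k - min (F k) q) := mul_nonneg hlam.le hR0
    exact le_min (by linarith) (by linarith)
  have e1 : |ρ - k| = max ρ k - min ρ k := by
    rw [max_comm ρ k, min_comm ρ k]; exact (max_sub_min_eq_abs k ρ).symm
  have e2 : |b - k| = max b k - min b k := by
    rw [max_comm b k, min_comm b k]; exact (max_sub_min_eq_abs k b).symm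
  rw [e1, e2, hHu] at *
  linarith [h1, h2]
end

section
/- One-sided decay recursion implies algebraic decay: if nonnegative numbers D_j^n satisfy D_j^{n+1} ≤ M_j^n − a (M_j^n)², with M_j^n := max{D_{j−1}^n, D_j^n, D_{j+1}^n} ≤ 1/(2a), for all j with |j| ≥ 2 and all n, then D_j^{n+1} ≤ 1/(min{|j|−1, n+1}·a) for all such j, n. -/
open Set

lemma psi_aux (a M k : ℝ) (ha : 0 < a) (hM0 : 0 ≤ M) (hk : 1 ≤ k)
    (h1 : M ≤ 1/(k*a)) (h2 : M ≤ 1/(2*a)) : M - a*M^2 ≤ 1/((k+1)*a) := by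
  have hk0 : 0 < k := by linarith
  have hka : 0 < k*a := by positivity
  have h2a : 0 < 2*a := by positivity
  have hu1 : M*(k*a) ≤ 1 := by
    rw [← le_div_iff₀ hka]; exact h1
  have hu2 : M*(2*a) ≤ 1 := by
    rw [← le_div_iff₀ h2a]; exact h2
  rw [le_div_iff₀ (by positivity : (0:ℝ) < (k+1)*a)]
  nlinarith [sq_nonneg (M*(2*a)-1), sq_nonneg (M*(k*a)-1), mul_nonneg (sub_nonneg.2 hu1) (sub_nonneg.2 hu2), mul_nonneg hM0 ha.le, sq_nonneg M, mul_nonneg (mul_nonneg hM0 ha.le) (sub_nonneg.2 hu2)]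

/-- Lemma `OSLC_lemma1` (Towers): if the nonnegative jumps satisfy the one-sided decay
recursion `D_j^{n+1} ≤ M_j^n − a(M_j^n)²` with `M_j^n = max{D_{j−1}^n, D_j^n, D_{j+1}^n}
≤ 1/(2a)` for all `|j| ≥ 2`, then `D_j^{n+1} ≤ 1/(min{|j|−1, n+1}·a)`. -/
theorem stmt_10
    (a : ℝ) (ha : 0 < a) (D : ℕ → ℤ → ℝ)
    (hD : ∀ n j, 0 ≤ D n j)
    (hrec : ∀ (n : ℕ) (j : ℤ), 2 ≤ j.natAbs →
      max (D n (j-1)) (max (D n j) (D n (j+1))) ≤ 1 / (2*a) ∧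
      D (n+1) j ≤ max (D n (j-1)) (max (D n j) (D n (j+1)))
                 - a * (max (D n (j-1)) (max (D n j) (D n (j+1))))^2) :
    ∀ (n : ℕ) (j : ℤ), 2 ≤ j.natAbs →
      D (n+1) j ≤ 1 / (((min (j.natAbs - 1) (n+1) : ℕ) : ℝ) * a) := by
  intro n
  induction n with
  | zero =>
    intro j hj
    obtain ⟨h1, h2⟩ := hrec 0 j hj
    have hmin : min (j.natAbs - 1) (0+1) = 1 := by omega
    rw [hmin]
    push_cast
    have hM0 : 0 ≤ max (D 0 (j-1)) (max (D 0 j) (D 0 (j+1))) :=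
      le_trans (hD 0 j) (le_max_of_le_right (le_max_left _ _))
    have h12 : 1/(2*a) ≤ 1/(1*a) := by
      apply one_div_le_one_div_of_le (by positivity); linarith
    nlinarith [sq_nonneg (max (D 0 (j-1)) (max (D 0 j) (D 0 (j+1))))]
  | succ n ih =>
    intro j hj
    obtain ⟨h1, h2⟩ := hrec (n+1) j hj
    set M := max (D (n+1) (j-1)) (max (D (n+1) j) (D (n+1) (j+1))) with hM
    have hM0 : 0 ≤ M := le_trans (hD (n+1) j) (le_max_of_le_right (le_max_left _ _))
    rcases eq_or_lt_of_le (show 1 ≤ min (j.natAbs - 1) (n+1+1) by omega) with hm | hm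
    · rw [← hm]
      push_cast
      have h12 : 1/(2*a) ≤ 1/(1*a) := by
        apply one_div_le_one_div_of_le (by positivity); linarith
      nlinarith [sq_nonneg M]
    · -- 2 ≤ m
      set m := min (j.natAbs - 1) (n+1+1) with hmdef
      have hm2 : 2 ≤ m := hm
      set k := m - 1 with hkdef
      have hk1 : 1 ≤ k := by omega
      have hbound : ∀ j' : ℤ, 2 ≤ j'.natAbs → k ≤ min (j'.natAbs - 1) (n+1) →
          D (n+1) j' ≤ 1/((k:ℝ)*a) := by
        intro j' hj' hk'
        refine le_trans (ih j' hj') ?_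
        apply one_div_le_one_div_of_le (by positivity)
        have : (k:ℝ) ≤ ((min (j'.natAbs - 1) (n+1) : ℕ) : ℝ) := by exact_mod_cast hk'
        nlinarith
      have habs : 3 ≤ j.natAbs := by omega
      have hMk : M ≤ 1/((k:ℝ)*a) := by
        apply max_le
        · exact hbound (j-1) (by omega) (by omega)
        apply max_le
        · exact hbound j (by omega) (by omega)
        · exact hbound (j+1) (by omega) (by omega)
      have key := psi_aux a M (k:ℝ) ha hM0 (by exact_mod_cast hk1) hMk h1
      have hmk : ((m:ℕ):ℝ) = (k:ℝ) + 1 := by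
        have : m = k + 1 := by omega
        rw [this]; push_cast; ring
      rw [hmk]
      linarith
end

section
/- A one-sided Lipschitz bound on positive jumps yields a local BV bound: if ρ_j^n ∈ [0,R] for all j and max{ρ_{j−1}^n − ρ_j^n, 0} ≤ 1/(min{|j|−1, n}·a) for all |j| ≥ 2 and n ≥ 1, then for indices i ≤ j ≤ J−1 with i ≥ 2 and n ≥ i−1, the total variation ∑_{j=i}^{J−1} |ρ_j^n − ρ_{j−1}^n| is bounded by a constant B depending only on R, J·Δx, 1/a and 1/(i·Δx), uniformly in n and Δx. -/
open Set

lemma tele_sum (f : ℤ → ℝ) (i : ℤ) : ∀ J : ℤ, i ≤ J →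
    ∑ j ∈ Finset.Icc i J, (f j - f (j-1)) = f J - f (i-1) := by
  refine Int.le_induction ?_ ?_
  · simp
  · intro J hJ ih
    have hins : Finset.Icc i (J+1) = insert (J+1) (Finset.Icc i J) := by
      ext x; simp only [Finset.mem_Icc, Finset.mem_insert]; omega
    have hnot : (J+1) ∉ Finset.Icc i J := by simp
    rw [hins, Finset.sum_insert hnot, ih]
    ring_nf

/-- Lemma `OSLC_lemma2`: a one-sided Lipschitz bound on the positive jumps yields a local
BV bound: there is a constant `B` depending only on `R`, `J·Δx`, `1/a` and `1/(i·Δx)`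
(uniformly in `n` and `Δx`) bounding `∑_{j=i}^{J−1} |ρ_j^n − ρ_{j−1}^n|`. -/
theorem stmt_11 :
    ∃ B : ℝ → ℝ → ℝ → ℝ → ℝ,
      ∀ (R a Δx : ℝ) (ρ : ℕ → ℤ → ℝ) (i J : ℤ) (n : ℕ),
        0 < R → 0 < a → 0 < Δx →
        2 ≤ i → i ≤ J - 1 → i - 1 ≤ (n : ℤ) →
        (∀ (m : ℕ) (j : ℤ), ρ m j ∈ Icc 0 R) →
        (∀ (m : ℕ) (j : ℤ), 2 ≤ j.natAbs → 1 ≤ m →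
          max (ρ m (j-1) - ρ m j) 0 ≤ 1 / (((min (j.natAbs - 1) m : ℕ) : ℝ) * a)) →
        ∑ j ∈ Finset.Icc i (J-1), |ρ n j - ρ n (j-1)|
          ≤ B R ((J : ℝ) * Δx) (1/a) (1/((i : ℝ) * Δx)) := by
  refine ⟨fun R P q r => R + 4 * P * q * r, ?_⟩
  intro R a Δx ρ i J n hR ha hΔx hi hiJ hn hbox hosl
  have hn1 : 1 ≤ n := by omega
  have hiR : (2:ℝ) ≤ (i:ℝ) := by exact_mod_cast hi
  have hiJR : (i:ℝ) ≤ (J:ℝ) - 1 := by exact_mod_cast hiJ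
  -- pointwise bound
  have key : ∀ j ∈ Finset.Icc i (J-1),
      |ρ n j - ρ n (j-1)| ≤ (ρ n j - ρ n (j-1)) + 2 * (1/(((i:ℝ)-1)*a)) := by
    intro j hj
    rw [Finset.mem_Icc] at hj
    have hj2 : 2 ≤ j.natAbs := by omega
    have hmax := hosl n j hj2 hn1
    have hmin : ((i:ℝ) - 1) ≤ ((min (j.natAbs - 1) n : ℕ) : ℝ) := by
      have h1 : i.toNat - 1 ≤ min (j.natAbs - 1) n := by omega
      have h2 : ((i.toNat - 1 : ℕ) : ℝ) = (i:ℝ) - 1 := by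
        have : ((i.toNat - 1 : ℕ) : ℤ) = i - 1 := by omega
        exact_mod_cast this
      rw [← h2]; exact_mod_cast h1
    have hipos : (0:ℝ) < (i:ℝ) - 1 := by linarith
    have hbound : max (ρ n (j-1) - ρ n j) 0 ≤ 1/(((i:ℝ)-1)*a) := by
      refine hmax.trans ?_
      apply one_div_le_one_div_of_le (by positivity)
      exact mul_le_mul_of_nonneg_right hmin ha.le
    have habs : |ρ n j - ρ n (j-1)| = (ρ n j - ρ n (j-1)) + 2 * max (ρ n (j-1) - ρ n j) 0 := by
      rcases le_total (ρ n (j-1)) (ρ n j) with h | h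
      · rw [abs_of_nonneg (by linarith), max_eq_right (by linarith)]; ring
      · rw [abs_of_nonpos (by linarith), max_eq_left (by linarith)]; ring
    rw [habs]
    linarith
  have hsum := Finset.sum_le_sum key
  rw [Finset.sum_add_distrib, Finset.sum_const] at hsum
  have htele := tele_sum (ρ n) i (J-1) hiJ
  rw [htele] at hsum
  have hcard : (Finset.Icc i (J-1)).card = (J - i).toNat := by
    rw [Int.card_Icc]; congr 1; omega
  rw [hcard] at hsum
  have hcardR : (((J - i).toNat : ℕ) : ℝ) = (J:ℝ) - (i:ℝ) := by
    have : (((J - i).toNat : ℕ) : ℤ) = J - i := by omega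
    exact_mod_cast this
  rw [nsmul_eq_mul, hcardR] at hsum
  have hb1 : ρ n (J-1) - ρ n (i-1) ≤ R := by
    have h1 := hbox n (J-1); have h2 := hbox n (i-1)
    simp only [mem_Icc] at h1 h2; linarith [h1.2, h2.1]
  refine hsum.trans ?_
  have hfinal : ((J:ℝ) - (i:ℝ)) * (2 * (1/(((i:ℝ)-1)*a)))
      ≤ 4 * ((J:ℝ) * Δx) * (1/a) * (1/((i:ℝ) * Δx)) := by
    have hipos : (0:ℝ) < (i:ℝ) - 1 := by linarith
    have hJpos : (0:ℝ) < (J:ℝ) := by linarith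
    have hIpos : (0:ℝ) < (i:ℝ) := by linarith
    have hrhs : 4 * ((J:ℝ) * Δx) * (1/a) * (1/((i:ℝ) * Δx)) = 4 * (J:ℝ) / ((i:ℝ) * a) := by
      field_simp
    rw [hrhs, mul_one_div, mul_div_assoc, mul_div_assoc', mul_div_assoc',
      div_le_div_iff₀ (by positivity) (by positivity)]
    have h2 : 2*(i:ℝ)*((J:ℝ)-(i:ℝ)) ≤ 4*(J:ℝ)*((i:ℝ)-1) := by nlinarith
    nlinarith [mul_le_mul_of_nonneg_right h2 ha.le]
  linarith
end

section
/- Discrete time-BV bound for the averaged density: let ρ_Δ be generated by the conservative scheme ρ_{j+1/2}^{n+1} = ρ_{j+1/2}^n − λ(𝐅_{j+1}^{n+1} − 𝐅_j^{n+1}) with values in [0,R] and numerical fluxes bounded by RL. Then for any smooth compactly supported μ_ℓ with ‖μ_ℓ‖_{L¹}, TV(μ_ℓ) ≤ K, the function ξ(t) = ∫_ℝ ρ_Δ(x,t) μ_ℓ(x) dx satisfies |ξ(t) − ξ(s)| ≤ R·L·K·(|t−s| + 2Δt) for all t, s ∈ [0,T]; consequently, for μ ∈ BV, ξ_Δ(t)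 = ∫ ρ_Δ μ has total variation on [0,T] at most 3RLK(T + Δt). -/
open MeasureTheory Set Filter Topology

/-!
Write `ξₙ = ∫ ρₙ(⌊x/Δx⌋) μ(x) dx`. One step of the conservative scheme changes `ξₙ` by `λ` times
the integral of the flux difference `F(j+1) - F(j)` against `μ`; shifting the cell index turns
this into `∫ F(⌊x/Δx⌋) (μ(x - Δx) - μ(x)) dx`, and a function of total variation `K` moves by at
most `Δx K` in `L¹` under a translation by `Δx`. Since `|F| ≤ RL`, this gives
`|ξₙ₊₁ - ξₙ| ≤ RLKΔt`, so `t ↦ ∫ ρ_Δ(x,t) μ(x) dx` is `RLKΔt`-Lipschitz in the step index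
`⌊t/Δt⌋`. Both the modulus of continuity in `t` and the bound on the variation over `[0, T]`
follow.
-/

lemma sum_abs_sub_le_of_eVariationOn_le {α : Type*} [LinearOrder α] {f : α → ℝ} {K : ℝ}
    (hK : 0 ≤ K) (hf : eVariationOn f univ ≤ ENNReal.ofReal K) {u : ℕ → α} (hu : Monotone u)
    (n : ℕ) : ∑ i ∈ Finset.range n, |f (u (i + 1)) - f (u i)| ≤ K := by
  rw [← ENNReal.ofReal_le_ofReal_iff hK, ENNReal.ofReal_sum_of_nonneg fun i _ => abs_nonneg _]
  simp_rw [← Real.dist_eq, ← edist_dist]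
  exact (eVariationOn.sum_le hu fun _ => mem_univ _).trans hf

section Translation

variable {f : ℝ → ℝ} {K h : ℝ}

lemma intervalIntegral_abs_sub_comp_sub_le (hf : Integrable f) (hK : 0 ≤ K)
    (hvar : eVariationOn f univ ≤ ENNReal.ofReal K) (hh : 0 ≤ h) (a : ℝ) (n : ℕ) :
    ∫ x in a..a + n * h, |f (x - h) - f x| ≤ h * K := by
  set φ : ℝ → ℝ := fun x => |f (x - h) - f x|
  have hφ : Integrable φ := ((hf.comp_sub_right h).sub hf).abs
  -- the terms are the increments of `f` along the grid `x - h, x, x + h, …`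
  have hsum : ∀ x, ∑ k ∈ Finset.range n, φ (x + k * h) ≤ K := fun x => by
    have hu : Monotone fun k : ℕ => x + k * h - h := fun i j hij => by
      have : (i : ℝ) ≤ j := by exact_mod_cast hij
      nlinarith
    refine le_of_eq_of_le (Finset.sum_congr rfl fun k _ => ?_)
      (sum_abs_sub_le_of_eVariationOn_le hK hvar hu n)
    have hshift : x + ((k + 1 : ℕ) : ℝ) * h - h = x + k * h := by push_cast; ring
    rw [hshift, abs_sub_comm]
  calc ∫ x in a..a + n * h, φ x
      = ∑ k ∈ Finset.range n, ∫ x in a + k * h..a + (k + 1 : ℕ) * h, φ x := by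
        rw [intervalIntegral.sum_integral_adjacent_intervals fun k _ => hφ.intervalIntegrable]
        simp
    _ = ∑ k ∈ Finset.range n, ∫ x in a..a + h, φ (x + k * h) := by
        refine Finset.sum_congr rfl fun k _ => ?_
        rw [intervalIntegral.integral_comp_add_right]
        push_cast
        ring_nf
    _ = ∫ x in a..a + h, ∑ k ∈ Finset.range n, φ (x + k * h) :=
        (intervalIntegral.integral_finsetSum fun k _ =>
          (hφ.comp_add_right _).intervalIntegrable).symm
    _ ≤ ∫ _ in a..a + h, K :=
        intervalIntegral.integral_mono_on (by linarith)
          (integrable_finsetSum _ fun k _ => hφ.comp_add_right _).intervalIntegrable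
          intervalIntegrable_const fun x _ => hsum x
    _ = h * K := by simp

lemma integral_abs_sub_comp_sub_le (hf : Integrable f) (hK : 0 ≤ K)
    (hvar : eVariationOn f univ ≤ ENNReal.ofReal K) (hh : 0 < h) :
    ∫ x, |f (x - h) - f x| ≤ h * K := by
  have hNh : Tendsto (fun N : ℕ => N * h) atTop atTop :=
    tendsto_natCast_atTop_atTop.atTop_mul_const hh
  refine le_of_tendsto (intervalIntegral_tendsto_integral ((hf.comp_sub_right h).sub hf).abs
    (tendsto_neg_atTop_atBot.comp hNh) hNh) (Eventually.of_forall fun N => ?_)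
  have := intervalIntegral_abs_sub_comp_sub_le hf hK hvar hh.le (-(N * h)) (2 * N)
  rwa [show -(N * h) + ((2 * N : ℕ) : ℝ) * h = N * h by push_cast; ring] at this

end Translation

section Cells

variable {Δx : ℝ} {μ : ℝ → ℝ}

lemma integrable_comp_floor_mul (hμ : Integrable μ) {ψ : ℤ → ℝ} {B : ℝ} (hψ : ∀ j, |ψ j| ≤ B) :
    Integrable fun x => ψ ⌊x / Δx⌋ * μ x :=
  hμ.bdd_mul ((measurable_of_countable ψ).comp
    (Int.measurable_floor.comp (measurable_id.div_const Δx))).aestronglyMeasurable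
    (Eventually.of_forall fun _ => hψ _)

lemma integral_comp_floor_add_one_mul (hΔx : Δx ≠ 0) (ψ : ℤ → ℝ) (μ : ℝ → ℝ) :
    ∫ x, ψ (⌊x / Δx⌋ + 1) * μ x = ∫ x, ψ ⌊x / Δx⌋ * μ (x - Δx) := by
  rw [← integral_add_right_eq_self (fun x => ψ ⌊x / Δx⌋ * μ (x - Δx)) Δx]
  simp [add_div, div_self hΔx, Int.floor_add_one]

lemma abs_integral_comp_floor_sub_mul_le (hΔx : 0 < Δx) (hμ : Integrable μ) {K : ℝ}
    (hK : 0 ≤ K) (hvar : eVariationOn μ univ ≤ ENNReal.ofReal K) {G : ℤ → ℝ} {B : ℝ}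
    (hG : ∀ j, |G j| ≤ B) :
    |∫ x, (G (⌊x / Δx⌋ + 1) - G ⌊x / Δx⌋) * μ x| ≤ B * (Δx * K) := by
  have hB : 0 ≤ B := (abs_nonneg _).trans (hG 0)
  have hμshift : Integrable fun x => μ (x - Δx) := hμ.comp_sub_right Δx
  -- summation by parts: the index shift `j ↦ j + 1` becomes the translation `x ↦ x - Δx`
  have hparts : ∫ x, (G (⌊x / Δx⌋ + 1) - G ⌊x / Δx⌋) * μ x
      = ∫ x, G ⌊x / Δx⌋ * (μ (x - Δx) - μ x) := by
    simp_rw [sub_mul, mul_sub]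
    rw [integral_sub (integrable_comp_floor_mul hμ fun j => hG (j + 1))
        (integrable_comp_floor_mul hμ hG),
      integral_sub (integrable_comp_floor_mul hμshift hG) (integrable_comp_floor_mul hμ hG),
      integral_comp_floor_add_one_mul hΔx.ne']
  calc |∫ x, (G (⌊x / Δx⌋ + 1) - G ⌊x / Δx⌋) * μ x|
      = ‖∫ x, G ⌊x / Δx⌋ * (μ (x - Δx) - μ x)‖ := by rw [hparts, Real.norm_eq_abs]
    _ ≤ ∫ x, B * |μ (x - Δx) - μ x| :=
        norm_integral_le_of_norm_le ((hμshift.sub hμ).abs.const_mul B)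
          (Eventually.of_forall fun x => by
            rw [Real.norm_eq_abs, abs_mul]
            exact mul_le_mul_of_nonneg_right (hG _) (abs_nonneg _))
    _ = B * ∫ x, |μ (x - Δx) - μ x| := integral_const_mul _ _
    _ ≤ B * (Δx * K) := by gcongr; exact integral_abs_sub_comp_sub_le hμ hK hvar hΔx

lemma abs_integral_comp_floor_conservative_step_le {Δt : ℝ} (hΔx : 0 < Δx) (hΔt : 0 ≤ Δt)
    (hμ : Integrable μ) {K : ℝ} (hK : 0 ≤ K) (hvar : eVariationOn μ univ ≤ ENNReal.ofReal K)
    {u v G : ℤ → ℝ} {A B : ℝ} (hu : ∀ j, |u j| ≤ A) (hG : ∀ j, |G j| ≤ B)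
    (hv : ∀ j, v j = u j - Δt / Δx * (G (j + 1) - G j)) :
    |(∫ x, v ⌊x / Δx⌋ * μ x) - ∫ x, u ⌊x / Δx⌋ * μ x| ≤ B * K * Δt := by
  have hdiff : Integrable fun x => (G (⌊x / Δx⌋ + 1) - G ⌊x / Δx⌋) * μ x :=
    integrable_comp_floor_mul (ψ := fun j => G (j + 1) - G j) hμ fun j =>
      (abs_sub _ _).trans (add_le_add (hG _) (hG _))
  have hstep : (∫ x, v ⌊x / Δx⌋ * μ x) - ∫ x, u ⌊x / Δx⌋ * μ x
      = -(Δt / Δx * ∫ x, (G (⌊x / Δx⌋ + 1) - G ⌊x / Δx⌋) * μ x) := by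
    have hv' : ∀ x, v ⌊x / Δx⌋ * μ x =
        u ⌊x / Δx⌋ * μ x - Δt / Δx * ((G (⌊x / Δx⌋ + 1) - G ⌊x / Δx⌋) * μ x) := fun x => by
      rw [hv]; ring
    rw [integral_congr_ae (Eventually.of_forall hv'),
      integral_sub (integrable_comp_floor_mul hμ hu) (hdiff.const_mul _), integral_const_mul]
    ring
  rw [hstep, abs_neg, abs_mul, abs_of_nonneg (a := Δt / Δx) (by positivity)]
  calc Δt / Δx * |∫ x, (G (⌊x / Δx⌋ + 1) - G ⌊x / Δx⌋) * μ x|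
      ≤ Δt / Δx * (B * (Δx * K)) := by
        gcongr; exact abs_integral_comp_floor_sub_mul_le hΔx hμ hK hvar hG
    _ = B * K * Δt := by field_simp

end Cells

lemma abs_sub_le_mul_abs_sub_of_abs_succ_sub_le {f : ℕ → ℝ} {C : ℝ}
    (hf : ∀ n, |f (n + 1) - f n| ≤ C) (m n : ℕ) : |f m - f n| ≤ C * |(m : ℝ) - n| := by
  wlog hnm : n ≤ m generalizing m n
  · rw [abs_sub_comm, abs_sub_comm (m : ℝ)]
    exact this n m (le_of_not_ge hnm)
  have := dist_le_Ico_sum_of_dist_le hnm (f := f) (d := fun _ => C) fun {k} _ _ => by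
    rw [dist_comm]; exact hf k
  rw [Finset.sum_const, Nat.card_Ico, nsmul_eq_mul, Nat.cast_sub hnm, dist_comm,
    Real.dist_eq] at this
  rw [abs_of_nonneg (a := (m : ℝ) - n) (sub_nonneg.2 (by exact_mod_cast hnm)), mul_comm]
  exact this

lemma abs_integral_scheme_sub_le {R L K Δx Δt : ℝ} (hΔx : 0 < Δx) (hΔt : 0 ≤ Δt) (hK : 0 ≤ K)
    {ρ : ℕ → ℤ → ℝ} {Fl : ℕ → ℤ → ℝ → ℝ → ℝ} (hρbd : ∀ n j, ρ n j ∈ Icc 0 R)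
    (hFlbd : ∀ n j a b, a ∈ Icc (0 : ℝ) R → b ∈ Icc (0 : ℝ) R → |Fl n j a b| ≤ R * L)
    (hscheme : ∀ n j, ρ (n + 1) j = ρ n j - Δt / Δx *
      (Fl (n + 1) (j + 1) (ρ n j) (ρ n (j + 1)) - Fl (n + 1) j (ρ n (j - 1)) (ρ n j)))
    {μ : ℝ → ℝ} (hμ : Integrable μ) (hvar : eVariationOn μ univ ≤ ENNReal.ofReal K) (m n : ℕ) :
    |(∫ x, ρ m ⌊x / Δx⌋ * μ x) - ∫ x, ρ n ⌊x / Δx⌋ * μ x| ≤ R * L * K * Δt * |(m : ℝ) - n| :=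
  abs_sub_le_mul_abs_sub_of_abs_succ_sub_le (f := fun n => ∫ x, ρ n ⌊x / Δx⌋ * μ x) (fun n =>
    abs_integral_comp_floor_conservative_step_le hΔx hΔt hμ hK hvar
      (u := ρ n) (v := ρ (n + 1)) (G := fun j => Fl (n + 1) j (ρ n (j - 1)) (ρ n j))
      (fun j => abs_of_nonneg (hρbd n j).1 ▸ (hρbd n j).2)
      (fun j => hFlbd _ _ _ _ (hρbd n _) (hρbd n _))
      (fun j => by rw [hscheme, add_sub_cancel_right])) m n

lemma abs_natFloor_sub_natFloor_le {α : Type*} [Field α] [LinearOrder α] [IsStrictOrderedRing α]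
    [FloorSemiring α] {a b : α} (ha : 0 ≤ a) (hb : 0 ≤ b) :
    |(⌊a⌋₊ : α) - ⌊b⌋₊| ≤ |a - b| + 1 := by
  rw [abs_sub_le_iff]
  constructor <;>
  linarith [Nat.floor_le ha, Nat.floor_le hb, Nat.lt_floor_add_one a, Nat.lt_floor_add_one b,
    le_abs_self (a - b), neg_abs_le (a - b)]

lemma eVariationOn_le_of_edist_le {α E F : Type*} [LinearOrder α] [PseudoEMetricSpace E]
    [PseudoEMetricSpace F] {f : α → E} {g : α → F} {s : Set α}
    (h : ∀ x ∈ s, ∀ y ∈ s, edist (f x) (f y) ≤ edist (g x) (g y)) :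
    eVariationOn f s ≤ eVariationOn g s :=
  iSup_mono fun p => Finset.sum_le_sum fun _ _ => h _ (p.2.2.2 _) _ (p.2.2.2 _)

section TimeGrid

variable {ξ : ℝ → ℝ} {C Δt : ℝ}

lemma abs_sub_le_of_abs_sub_le_mul_natFloor (hΔt : 0 < Δt)
    (hξ : ∀ t s, |ξ t - ξ s| ≤ C * Δt * |(⌊t / Δt⌋₊ : ℝ) - ⌊s / Δt⌋₊|) (hC : 0 ≤ C)
    {t s : ℝ} (ht : 0 ≤ t) (hs : 0 ≤ s) :
    |ξ t - ξ s| ≤ C * (|t - s| + Δt) :=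
  calc |ξ t - ξ s| ≤ C * Δt * (|t / Δt - s / Δt| + 1) := by
        grw [hξ, abs_natFloor_sub_natFloor_le (div_nonneg ht hΔt.le) (div_nonneg hs hΔt.le)]
    _ = C * (|t - s| + Δt) := by rw [← sub_div, abs_div, abs_of_pos hΔt]; field_simp

lemma eVariationOn_Icc_le_of_abs_sub_le_mul_natFloor (hΔt : 0 < Δt)
    (hξ : ∀ t s, |ξ t - ξ s| ≤ C * Δt * |(⌊t / Δt⌋₊ : ℝ) - ⌊s / Δt⌋₊|) (hC : 0 ≤ C)
    {T : ℝ} (hT : 0 ≤ T) :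
    eVariationOn ξ (Icc 0 T) ≤ ENNReal.ofReal (C * T) := by
  have hmono : Monotone fun t : ℝ => C * Δt * ⌊t / Δt⌋₊ := fun a b hab =>
    mul_le_mul_of_nonneg_left (Nat.cast_le.2 (Nat.floor_le_floor (by gcongr))) (by positivity)
  calc eVariationOn ξ (Icc 0 T)
      ≤ eVariationOn (fun t : ℝ => C * Δt * ⌊t / Δt⌋₊) (Icc 0 T) :=
        eVariationOn_le_of_edist_le fun t _ s _ => by
          rw [edist_dist, edist_dist, Real.dist_eq, Real.dist_eq, ← mul_sub, abs_mul,
            abs_of_nonneg (a := C * Δt) (by positivity)]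
          exact ENNReal.ofReal_le_ofReal (hξ t s)
    _ = ENNReal.ofReal (C * Δt * ⌊T / Δt⌋₊) := by
        simpa using
          (hmono.monotoneOn (Icc 0 T)).eVariationOn_eq (left_mem_Icc.2 hT) (right_mem_Icc.2 hT)
    _ ≤ ENNReal.ofReal (C * T) := by
        refine ENNReal.ofReal_le_ofReal ?_
        grw [Nat.floor_le (by positivity)]
        exact (by field_simp : C * Δt * (T / Δt) = C * T).le

end TimeGrid

/-- Lemma `bus_BV_VF`: for the conservative scheme with numerical fluxes bounded by `RL`
and values in `[0,R]`, and any smooth compactly supported weight `μ_ℓ` with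
`‖μ_ℓ‖_{L¹}, TV(μ_ℓ) ≤ K`, the function `ξ(t) = ∫ ρ_Δ(x,t) μ_ℓ(x) dx` satisfies
`|ξ(t) − ξ(s)| ≤ RLK(|t−s| + 2Δt)`; consequently, for `μ ∈ BV` with the same bounds,
`ξ_Δ(t) = ∫ ρ_Δ μ` has total variation on `[0,T]` at most `3RLK(T + Δt)`. -/
theorem stmt_12
    (T R L K Δx Δt : ℝ) (hT : 0 < T) (hR : 0 < R) (hL : 0 < L) (hK : 0 < K)
    (hΔx : 0 < Δx) (hΔt : 0 < Δt)
    (ρ : ℕ → ℤ → ℝ) (Fl : ℕ → ℤ → ℝ → ℝ → ℝ)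
    (hρbd : ∀ n j, ρ n j ∈ Icc 0 R)
    (hFlbd : ∀ n j a b, a ∈ Icc (0:ℝ) R → b ∈ Icc (0:ℝ) R → |Fl n j a b| ≤ R * L)
    (hscheme : ∀ n j, ρ (n+1) j
      = ρ n j - (Δt/Δx) * (Fl (n+1) (j+1) (ρ n j) (ρ n (j+1))
                            - Fl (n+1) j (ρ n (j-1)) (ρ n j)))
    (ρΔ : ℝ → ℝ → ℝ)
    (hρΔ : ∀ x t, ρΔ x t = ρ (⌊t/Δt⌋.toNat) ⌊x/Δx⌋) :
    (∀ μl : ℝ → ℝ, ContDiff ℝ (⊤ : ℕ∞) μl → HasCompactSupport μl →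
      (∫ x, |μl x|) ≤ K → eVariationOn μl Set.univ ≤ ENNReal.ofReal K →
      ∀ t ∈ Icc (0:ℝ) T, ∀ s ∈ Icc (0:ℝ) T,
        |(∫ x, ρΔ x t * μl x) - ∫ x, ρΔ x s * μl x| ≤ R*L*K*(|t - s| + 2*Δt)) ∧
    (∀ μ : ℝ → ℝ, Integrable μ →
      (∫ x, |μ x|) ≤ K → eVariationOn μ Set.univ ≤ ENNReal.ofReal K →
      eVariationOn (fun t => ∫ x, ρΔ x t * μ x) (Icc 0 T)
        ≤ ENNReal.ofReal (3*R*L*K*(T + Δt))) := by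
  have hRLK : 0 ≤ R * L * K := by positivity
  have hξ : ∀ μ : ℝ → ℝ, Integrable μ → eVariationOn μ univ ≤ ENNReal.ofReal K → ∀ t s,
      |(∫ x, ρΔ x t * μ x) - ∫ x, ρΔ x s * μ x|
        ≤ R * L * K * Δt * |(⌊t / Δt⌋₊ : ℝ) - ⌊s / Δt⌋₊| := fun μ hμ hvar t s => by
    simp only [hρΔ, Int.floor_toNat]
    exact abs_integral_scheme_sub_le hΔx hΔt.le hK.le hρbd hFlbd hscheme hμ hvar _ _
  refine ⟨fun μl hsmooth hsupp _ hvar t ht s hs => ?_, fun μ hμ _ hvar => ?_⟩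
  · have hμl : Integrable μl := hsmooth.continuous.integrable_of_hasCompactSupport hsupp
    calc |(∫ x, ρΔ x t * μl x) - ∫ x, ρΔ x s * μl x| ≤ R * L * K * (|t - s| + Δt) :=
          abs_sub_le_of_abs_sub_le_mul_natFloor hΔt (hξ μl hμl hvar) hRLK ht.1 hs.1
      _ ≤ R * L * K * (|t - s| + 2 * Δt) := by gcongr; linarith
  · calc eVariationOn (fun t => ∫ x, ρΔ x t * μ x) (Icc 0 T) ≤ ENNReal.ofReal (R * L * K * T) :=
          eVariationOn_Icc_le_of_abs_sub_le_mul_natFloor hΔt (hξ μ hμ hvar) hRLK hT.le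
      _ ≤ ENNReal.ofReal (3 * R * L * K * (T + Δt)) := ENNReal.ofReal_le_ofReal (by nlinarith)
end

section
/- Approximate entropy inequality error bound for the scheme: summing the discrete entropy inequalities against cell averages of a nonnegative test function φ, the resulting inequality differs from the exact entropy inequality by at most c₁(Δt + Δx), where c₁ depends only on R, T, the flux Lipschitz constant L, and norms of φ; in particular the term A = ∑_{n,j}|ρ_{j+1/2}^n − k|(φ_{j+1/2}^n − φ_{j+1/2}^{n−1})Δx satisfies |A − ∫_τ^{τ'}∫_ℝ |ρ_Δ−k| ∂ₜφ dx dt| ≤ R(T‖∂²_{tt}φ‖_{L∞_t L¹_x} + 2‖∂ₜφ‖_{L∞_t L¹_x})Δt. -/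
/-!
Since `ρ_Δ` is constant on the cells, the cell averages of `φ` turn the `n`-th slab of `A` into
the integral over `[nΔt, (n+1)Δt) × ℝ` of `|ρ_Δ − k|` times the backward difference quotient
`(φ(x,t) − φ(x,t−Δt))/Δt`; the slabs add up to the integral over `[(p+1)Δt, mΔt)`.
Taylor's formula with integral remainder bounds the difference quotient minus `∂ₜφ` by
`∫_{t−Δt}^t |∂²ₜφ|`, whose integral in `x` is at most `Δt N₂` by Fubini, which costs `R T N₂ Δt`
on `[(p+1)Δt, mΔt)`. The two leftover intervals `[τ, (p+1)Δt]` and `[mΔt, τ']` are shorter than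
`Δt` and cost at most `R N₁ Δt` each.
-/
open MeasureTheory Set Filter Topology

section TimeDeriv

variable {E F : Type*} [NormedAddCommGroup E] [NormedSpace ℝ E] [NormedAddCommGroup F]
  [NormedSpace ℝ F]

/-- Defined through `fderiv` rather than `deriv` so that joint smoothness and compact support
pass to it. -/
noncomputable def timeDeriv (f : E × ℝ → F) (q : E × ℝ) : F :=
  fderiv ℝ f q (0, 1)

theorem ContDiff.timeDeriv {f : E × ℝ → F} {n : WithTop ℕ∞} (hf : ContDiff ℝ (n + 1) f) :
    ContDiff ℝ n (timeDeriv f) :=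
  (hf.fderiv_right le_rfl).clm_apply contDiff_const

theorem HasCompactSupport.timeDeriv {f : E × ℝ → F} (hf : HasCompactSupport f) :
    HasCompactSupport (timeDeriv f) :=
  (hf.fderiv ℝ).mono fun q hq h0 => hq (by simp [_root_.timeDeriv, h0])

theorem hasDerivAt_timeDeriv {f : E × ℝ → F} (hf : Differentiable ℝ f) (x : E) (t : ℝ) :
    HasDerivAt (fun s => f (x, s)) (timeDeriv f (x, t)) t :=
  (hf (x, t)).hasFDerivAt.comp_hasDerivAt t ((hasDerivAt_const t x).prodMk (hasDerivAt_id t))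

theorem deriv_eq_timeDeriv {φ : E → ℝ → F} (hφ : Differentiable ℝ (Function.uncurry φ)) (x : E)
    (t : ℝ) : deriv (φ x) t = timeDeriv (Function.uncurry φ) (x, t) :=
  (hasDerivAt_timeDeriv hφ x t).deriv

theorem deriv_deriv_eq_timeDeriv_timeDeriv {φ : E → ℝ → F}
    (hφ : ContDiff ℝ 2 (Function.uncurry φ)) (x : E) (t : ℝ) :
    deriv (deriv (φ x)) t = timeDeriv (timeDeriv (Function.uncurry φ)) (x, t) := by
  rw [funext (deriv_eq_timeDeriv (hφ.differentiable two_ne_zero) x)]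
  exact (hasDerivAt_timeDeriv (hφ.timeDeriv.differentiable one_ne_zero) x t).deriv

end TimeDeriv

open intervalIntegral in
theorem abs_sub_sub_mul_deriv_le_mul_integral {u u' u'' : ℝ → ℝ}
    (hu : ∀ s, HasDerivAt u (u' s) s) (hu' : ∀ s, HasDerivAt u' (u'' s) s)
    (hu'' : Continuous u'') {a b : ℝ} (hab : a ≤ b) :
    |u b - u a - (b - a) * u' b| ≤ (b - a) * ∫ s in a..b, |u'' s| := by
  have hu'c : Continuous u' := continuous_iff_continuousAt.2 fun s => (hu' s).continuousAt
  have hu_ftc : u b - u a = ∫ s in a..b, u' s :=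
    (integral_eq_sub_of_hasDerivAt (fun s _ => hu s) (hu'c.intervalIntegrable _ _)).symm
  have hu'_ftc : ∀ s, u' b - u' s = ∫ r in s..b, u'' r := fun s =>
    (integral_eq_sub_of_hasDerivAt (fun r _ => hu' r) (hu''.intervalIntegrable _ _)).symm
  have hvar : ∀ s ∈ uIoc a b, ‖u' s - u' b‖ ≤ ∫ r in a..b, |u'' r| := by
    intro s hs
    rw [uIoc_of_le hab] at hs
    rw [Real.norm_eq_abs, abs_sub_comm, hu'_ftc]
    calc |∫ r in s..b, u'' r| ≤ ∫ r in s..b, |u'' r| := abs_integral_le_integral_abs hs.2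
      _ ≤ ∫ r in a..b, |u'' r| :=
        integral_mono_interval hs.1.le hs.2 le_rfl (.of_forall fun r => abs_nonneg _)
          (hu''.abs.intervalIntegrable _ _)
  calc |u b - u a - (b - a) * u' b| = ‖∫ s in a..b, (u' s - u' b)‖ := by
        rw [integral_sub (hu'c.intervalIntegrable _ _) intervalIntegrable_const,
          intervalIntegral.integral_const, hu_ftc, smul_eq_mul, Real.norm_eq_abs]
    _ ≤ (∫ r in a..b, |u'' r|) * |b - a| := norm_integral_le_of_norm_le_const hvar
    _ = (b - a) * ∫ s in a..b, |u'' s| := by rw [abs_of_nonneg (sub_nonneg.2 hab), mul_comm]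

section BackwardDiffQuot

variable {E : Type*} [NormedAddCommGroup E]

noncomputable def backwardDiffQuot (Δt : ℝ) (f : E × ℝ → ℝ) (q : E × ℝ) : ℝ :=
  (f q - f (q.1, q.2 - Δt)) / Δt

theorem Continuous.backwardDiffQuot {f : E × ℝ → ℝ} (hf : Continuous f) (Δt : ℝ) :
    Continuous (backwardDiffQuot Δt f) := by
  unfold _root_.backwardDiffQuot; fun_prop

theorem HasCompactSupport.backwardDiffQuot {f : E × ℝ → ℝ} (hf : HasCompactSupport f) (Δt : ℝ) :
    HasCompactSupport (backwardDiffQuot Δt f) := by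
  have hshift : HasCompactSupport fun q : E × ℝ => f (q.1, q.2 - Δt) := by
    convert hf.comp_homeomorph (Homeomorph.addRight ((0 : E), -Δt)) using 2 with q
    simp [Prod.add_def, sub_eq_add_neg]
  exact hf.comp₂_left hshift (m := fun a b => (a - b) / Δt) (by simp)

theorem abs_backwardDiffQuot_sub_timeDeriv_le [NormedSpace ℝ E] {f : E × ℝ → ℝ}
    (hf : ContDiff ℝ 2 f) {Δt : ℝ} (hΔt : 0 < Δt) (x : E) (t : ℝ) :
    |backwardDiffQuot Δt f (x, t) - timeDeriv f (x, t)|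
      ≤ ∫ u in t - Δt..t, |timeDeriv (timeDeriv f) (x, u)| := by
  have hf1 : ContDiff ℝ 1 (timeDeriv f) := hf.timeDeriv
  have key := abs_sub_sub_mul_deriv_le_mul_integral
    (hasDerivAt_timeDeriv (hf.differentiable two_ne_zero) x)
    (hasDerivAt_timeDeriv (hf1.differentiable one_ne_zero) x)
    ((hf1.timeDeriv (n := 0)).continuous.comp (continuous_const.prodMk continuous_id))
    (sub_le_self t hΔt.le)
  rw [sub_sub_cancel] at key
  rw [backwardDiffQuot, div_sub' hΔt.ne', abs_div, abs_of_pos hΔt, div_le_iff₀ hΔt, mul_comm]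
  simpa only [mul_comm Δt] using key

end BackwardDiffQuot

theorem HasCompactSupport.comp_prodMk_left {X Y M : Type*} [TopologicalSpace X]
    [TopologicalSpace Y] [R1Space X] [Zero M] {f : X × Y → M} (hf : HasCompactSupport f) (y : Y) :
    HasCompactSupport fun x => f (x, y) :=
  .intro (hf.isCompact.image continuous_fst) fun x hx =>
    image_eq_zero_of_notMem_tsupport fun h => hx ⟨(x, y), h, rfl⟩

theorem Continuous.integrable_comp_prodMk_left {v : ℝ × ℝ → ℝ} (hv : Continuous v)
    (hvs : HasCompactSupport v) (t : ℝ) : Integrable fun x => v (x, t) :=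
  (hv.comp (Continuous.prodMk_left t)).integrable_of_hasCompactSupport (hvs.comp_prodMk_left t)

theorem integral_integral_abs_le_mul {f : ℝ × ℝ → ℝ} (hf : Integrable f) {N : ℝ}
    (hN : ∀ u, ∫ x, |f (x, u)| ≤ N) {a b : ℝ} (hab : a ≤ b) :
    ∫ x, ∫ u in a..b, |f (x, u)| ≤ (b - a) * N := by
  have hint : Integrable (Function.uncurry fun x u => |f (x, u)|)
      ((volume : Measure ℝ).prod (volume.restrict (Ioc a b))) := by
    rw [Measure.volume_eq_prod] at hf
    exact hf.abs.mono_measure (Measure.prod_mono le_rfl Measure.restrict_le_self)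
  simp_rw [intervalIntegral.integral_of_le hab]
  rw [integral_integral_swap hint]
  calc ∫ u in Ioc a b, ∫ x, |f (x, u)| ≤ ‖∫ u in Ioc a b, ∫ x, |f (x, u)|‖ := le_abs_self _
    _ ≤ N * volume.real (Ioc a b) := norm_setIntegral_le_of_norm_le_const measure_Ioc_lt_top
        fun u _ => by rw [Real.norm_of_nonneg (integral_nonneg fun x => abs_nonneg _)]; exact hN u
    _ = (b - a) * N := by rw [Real.volume_real_Ioc_of_le hab, mul_comm]

theorem hasSum_integral_integral_Ioc_cells {α E : Type*} [MeasurableSpace α]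
    [NormedAddCommGroup E] [NormedSpace ℝ E] {μ : Measure α} [SFinite μ] {G : ℝ × α → E}
    (hG : Integrable G (volume.prod μ)) {Δ : ℝ} (hΔ : 0 < Δ) :
    HasSum (fun j : ℤ => ∫ t, (∫ x in Ioc (j * Δ) ((j + 1) * Δ), G (x, t)) ∂μ)
      (∫ t, (∫ x, G (x, t)) ∂μ) := by
  have hcover : ⋃ j : ℤ, Ioc (j * Δ) ((j + 1) * Δ) = univ := by
    simpa only [zsmul_eq_mul, Int.cast_add, Int.cast_one] using iUnion_Ioc_zsmul hΔ
  have hdisj : Pairwise (Function.onFun Disjoint fun j : ℤ => Ioc (j * Δ) ((j + 1) * Δ)) := by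
    simpa only [zsmul_eq_mul, Int.cast_add, Int.cast_one] using pairwise_disjoint_Ioc_zsmul Δ
  have hcell : ∀ s : Set ℝ, ∫ t, (∫ x in s, G (x, t)) ∂μ = ∫ z in s ×ˢ univ, G z ∂volume.prod μ :=
    fun s => by
      rw [← Measure.prod_restrict, Measure.restrict_univ, integral_prod_symm]
      exact hG.mono_measure (Measure.prod_mono Measure.restrict_le_self le_rfl)
  have htotal : ∫ t, (∫ x, G (x, t)) ∂μ
      = ∫ z in ⋃ j : ℤ, Ioc (j * Δ) ((j + 1) * Δ) ×ˢ univ, G z ∂volume.prod μ := by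
    rw [← iUnion_prod_const, hcover, univ_prod_univ, Measure.restrict_univ,
      integral_prod_symm _ hG]
  simp_rw [hcell, htotal]
  exact hasSum_integral_iUnion (fun j => measurableSet_Ioc.prod MeasurableSet.univ)
    (fun i j hij => (hdisj hij).set_prod_left _ _) hG.integrableOn

theorem intervalIntegral.integral_congr_Ico {E : Type*} [NormedAddCommGroup E] [NormedSpace ℝ E]
    {f g : ℝ → E} {a b : ℝ} (hab : a ≤ b) (h : EqOn f g (Ico a b)) :
    ∫ x in a..b, f x = ∫ x in a..b, g x := by
  simp only [integral_of_le hab, ← integral_Ico_eq_integral_Ioc]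
  exact setIntegral_congr_fun measurableSet_Ico h

theorem Int.floor_div_eq_of_mem_Ico {x Δ : ℝ} (hΔ : 0 < Δ) {j : ℤ}
    (hx : x ∈ Ico (j * Δ) ((j + 1) * Δ)) : ⌊x / Δ⌋ = j :=
  Int.floor_eq_iff.2 ⟨(le_div_iff₀ hΔ).2 hx.1, (div_lt_iff₀ hΔ).2 hx.2⟩

theorem integral_integral_backwardDiffQuot {f : ℝ × ℝ → ℝ} (hf : Continuous f)
    (a b c d Δt : ℝ) :
    ∫ t in a..b, ∫ x in c..d, backwardDiffQuot Δt f (x, t)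
      = ((∫ t in a..b, ∫ x in c..d, f (x, t))
          - ∫ t in a - Δt..b - Δt, ∫ x in c..d, f (x, t)) / Δt := by
  have hslice : ∀ r, Continuous fun t => ∫ x in c..d, f (x, t - r) := fun r =>
    intervalIntegral.continuous_parametric_intervalIntegral_of_continuous'
      (f := fun t x => f (x, t - r)) (by fun_prop) c d
  have hslice' : Continuous fun t => ∫ x in c..d, f (x, t) := by
    simpa only [sub_zero] using hslice 0
  rw [← intervalIntegral.integral_comp_sub_right _ Δt,
    ← intervalIntegral.integral_sub (hslice'.intervalIntegrable _ _)
      ((hslice Δt).intervalIntegrable _ _), ← intervalIntegral.integral_div]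
  refine intervalIntegral.integral_congr fun t _ => ?_
  simp only [backwardDiffQuot]
  rw [intervalIntegral.integral_div, ← intervalIntegral.integral_sub]
  all_goals exact (by fun_prop : Continuous _).intervalIntegrable _ _

theorem integral_integral_mul_eq_of_eqOn_Ico {w : ℝ → ℝ → ℝ} {v : ℝ × ℝ → ℝ} {a b c d C : ℝ}
    (hab : a ≤ b) (hcd : c ≤ d) (hw : ∀ t ∈ Ico a b, ∀ x ∈ Ico c d, w x t = C) :
    ∫ t in a..b, ∫ x in c..d, w x t * v (x, t) = C * ∫ t in a..b, ∫ x in c..d, v (x, t) := by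
  rw [← intervalIntegral.integral_const_mul]
  refine intervalIntegral.integral_congr_Ico hab fun t ht => ?_
  rw [← intervalIntegral.integral_const_mul]
  exact intervalIntegral.integral_congr_Ico hcd fun x hx => by simp only [hw t ht x hx]

section Weighted

variable {w : ℝ → ℝ → ℝ} {R : ℝ}

theorem integrable_weight_mul (hw : Measurable (Function.uncurry w))
    (hwR : ∀ x t, |w x t| ≤ R) {v : ℝ × ℝ → ℝ} (hv : Continuous v) (hvs : HasCompactSupport v) :
    Integrable fun q : ℝ × ℝ => w q.1 q.2 * v q :=
  (hv.integrable_of_hasCompactSupport hvs).bdd_mul hw.aestronglyMeasurable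
    (.of_forall fun q => hwR q.1 q.2)

theorem integrable_weight_mul_slice (hw : Measurable (Function.uncurry w))
    (hwR : ∀ x t, |w x t| ≤ R) {v : ℝ × ℝ → ℝ} (hv : Continuous v) (hvs : HasCompactSupport v)
    (t : ℝ) : Integrable fun x => w x t * v (x, t) :=
  (hv.integrable_comp_prodMk_left hvs t).bdd_mul
    (hw.comp (measurable_id.prodMk measurable_const)).aestronglyMeasurable
    (.of_forall fun x => hwR x t)

theorem abs_integral_weight_mul_le (hwR : ∀ x t, |w x t| ≤ R) {v : ℝ × ℝ → ℝ} {t N : ℝ}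
    (hv : Integrable fun x => v (x, t)) (hN : ∫ x, |v (x, t)| ≤ N) :
    |∫ x, w x t * v (x, t)| ≤ R * N := by
  have hR : 0 ≤ R := (abs_nonneg _).trans (hwR 0 0)
  calc |∫ x, w x t * v (x, t)| ≤ ∫ x, R * |v (x, t)| :=
        norm_integral_le_of_norm_le (hv.abs.const_mul R) (.of_forall fun x => by
          rw [Real.norm_eq_abs, abs_mul]
          exact mul_le_mul_of_nonneg_right (hwR x t) (abs_nonneg _))
    _ = R * ∫ x, |v (x, t)| := integral_const_mul R _
    _ ≤ R * N := mul_le_mul_of_nonneg_left hN hR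

theorem abs_integral_weight_mul_backwardDiffQuot_sub_le (hw : Measurable (Function.uncurry w))
    (hwR : ∀ x t, |w x t| ≤ R) {f : ℝ × ℝ → ℝ} (hf : ContDiff ℝ 2 f) (hfs : HasCompactSupport f)
    {N : ℝ} (hN : ∀ u, ∫ x, |timeDeriv (timeDeriv f) (x, u)| ≤ N) {Δt : ℝ} (hΔt : 0 < Δt)
    (t : ℝ) :
    |(∫ x, w x t * backwardDiffQuot Δt f (x, t)) - ∫ x, w x t * timeDeriv f (x, t)|
      ≤ R * (Δt * N) := by
  have hR : 0 ≤ R := (abs_nonneg _).trans (hwR 0 0)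
  have hf1 : ContDiff ℝ 1 (timeDeriv f) := hf.timeDeriv
  have hf2 : Continuous (timeDeriv (timeDeriv f)) := (hf1.timeDeriv (n := 0)).continuous
  have hf2_int : Integrable (timeDeriv (timeDeriv f)) :=
    hf2.integrable_of_hasCompactSupport hfs.timeDeriv.timeDeriv
  have hdom : Integrable fun x => ∫ u in t - Δt..t, |timeDeriv (timeDeriv f) (x, u)| := by
    simp_rw [intervalIntegral.integral_of_le (sub_le_self t hΔt.le)]
    exact (hf2_int.abs.mono_measure
      (Measure.prod_mono le_rfl Measure.restrict_le_self)).integral_prod_left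
  rw [← integral_sub (integrable_weight_mul_slice hw hwR (hf.continuous.backwardDiffQuot Δt)
      (hfs.backwardDiffQuot Δt) t)
    (integrable_weight_mul_slice hw hwR hf1.continuous hfs.timeDeriv t)]
  simp_rw [← mul_sub]
  calc |∫ x, w x t * (backwardDiffQuot Δt f (x, t) - timeDeriv f (x, t))|
      ≤ ∫ x, R * ∫ u in t - Δt..t, |timeDeriv (timeDeriv f) (x, u)| :=
        norm_integral_le_of_norm_le (hdom.const_mul R) (.of_forall fun x => by
          rw [Real.norm_eq_abs, abs_mul]
          exact mul_le_mul (hwR x t) (abs_backwardDiffQuot_sub_timeDeriv_le hf hΔt x t)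
            (abs_nonneg _) hR)
    _ = R * ∫ x, ∫ u in t - Δt..t, |timeDeriv (timeDeriv f) (x, u)| := integral_const_mul R _
    _ ≤ R * ((t - (t - Δt)) * N) := mul_le_mul_of_nonneg_left
        (integral_integral_abs_le_mul hf2_int hN (sub_le_self t hΔt.le)) hR
    _ = R * (Δt * N) := by rw [sub_sub_cancel]

end Weighted

theorem measurable_grid {β : Type*} [MeasurableSpace β] (u : ℕ → ℤ → β) (Δx Δt : ℝ) :
    Measurable fun q : ℝ × ℝ => u ⌊q.2 / Δt⌋.toNat ⌊q.1 / Δx⌋ :=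
  (measurable_of_countable fun nj : ℕ × ℤ => u nj.1 nj.2).comp
    (((measurable_of_countable Int.toNat).comp
        (Int.measurable_floor.comp (measurable_snd.div_const Δt))).prodMk
      (Int.measurable_floor.comp (measurable_fst.div_const Δx)))

theorem grid_eq_of_mem_Ico {β : Type*} (u : ℕ → ℤ → β) {Δx Δt : ℝ} (hΔx : 0 < Δx)
    (hΔt : 0 < Δt) {n : ℕ} {j : ℤ} {x t : ℝ} (ht : t ∈ Ico (n * Δt) ((n + 1) * Δt))
    (hx : x ∈ Ico (j * Δx) ((j + 1) * Δx)) : u ⌊t / Δt⌋.toNat ⌊x / Δx⌋ = u n j := by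
  rw [Int.floor_div_eq_of_mem_Ico hΔx hx,
    Int.floor_div_eq_of_mem_Ico (j := n) hΔt (by exact_mod_cast ht), Int.toNat_natCast]

section CellAverages

variable {φ : ℝ → ℝ → ℝ} {Δx Δt : ℝ} {φavg : ℕ → ℤ → ℝ}

theorem cellAvg_sub_cellAvg_pred_mul (hφ : Continuous (Function.uncurry φ)) (hΔx : Δx ≠ 0)
    (hΔt : Δt ≠ 0)
    (hφavg : ∀ (n : ℕ) (j : ℤ),
      φavg n j = (1/(Δx*Δt)) *
        ∫ t in ((n : ℝ) * Δt)..(((n : ℝ) + 1) * Δt),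
          ∫ x in ((j : ℝ) * Δx)..(((j : ℝ) + 1) * Δx), φ x t)
    {n : ℕ} (hn : 1 ≤ n) (j : ℤ) :
    (φavg n j - φavg (n - 1) j) * Δx
      = ∫ t in (n * Δt)..((n + 1) * Δt), ∫ x in (j * Δx)..((j + 1) * Δx),
          backwardDiffQuot Δt (Function.uncurry φ) (x, t) := by
  rw [integral_integral_backwardDiffQuot hφ, hφavg, hφavg, Nat.cast_sub hn, Nat.cast_one,
    sub_add_cancel, show ((n : ℝ) + 1) * Δt - Δt = n * Δt by ring,
    show (n : ℝ) * Δt - Δt = (n - 1) * Δt by ring]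
  simp only [Function.uncurry_apply_pair]
  field_simp

theorem tsum_mul_cellAvg_sub_eq_integral (hφ : Continuous (Function.uncurry φ)) (hΔx : 0 < Δx)
    (hΔt : 0 < Δt)
    (hφavg : ∀ (n : ℕ) (j : ℤ),
      φavg n j = (1/(Δx*Δt)) *
        ∫ t in ((n : ℝ) * Δt)..(((n : ℝ) + 1) * Δt),
          ∫ x in ((j : ℝ) * Δx)..(((j : ℝ) + 1) * Δx), φ x t)
    {w : ℝ → ℝ → ℝ} {c : ℕ → ℤ → ℝ}
    (hwc : ∀ (n : ℕ) (j : ℤ), ∀ t ∈ Ico (n * Δt) ((n + 1) * Δt),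
      ∀ x ∈ Ico (j * Δx) ((j + 1) * Δx), w x t = c n j)
    (hint : Integrable fun q : ℝ × ℝ => w q.1 q.2 * backwardDiffQuot Δt (Function.uncurry φ) q)
    {n : ℕ} (hn : 1 ≤ n) :
    ∑' j : ℤ, c n j * (φavg n j - φavg (n - 1) j) * Δx
      = ∫ t in (n * Δt)..((n + 1) * Δt),
          ∫ x, w x t * backwardDiffQuot Δt (Function.uncurry φ) (x, t) := by
  have hslab : (n : ℝ) * Δt ≤ (n + 1) * Δt := by gcongr; linarith
  have hcell : ∀ j : ℤ, c n j * (φavg n j - φavg (n - 1) j) * Δx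
      = ∫ t in Ioc (n * Δt) ((n + 1) * Δt), ∫ x in Ioc (j * Δx) ((j + 1) * Δx),
          w x t * backwardDiffQuot Δt (Function.uncurry φ) (x, t) := fun j => by
    have hcell_le : (j : ℝ) * Δx ≤ (j + 1) * Δx := by gcongr; linarith
    rw [mul_assoc, cellAvg_sub_cellAvg_pred_mul hφ hΔx.ne' hΔt.ne' hφavg hn j,
      ← integral_integral_mul_eq_of_eqOn_Ico hslab hcell_le (hwc n j),
      intervalIntegral.integral_of_le hslab]
    simp_rw [intervalIntegral.integral_of_le hcell_le]
  rw [tsum_congr hcell, intervalIntegral.integral_of_le hslab]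
  exact (hasSum_integral_integral_Ioc_cells
    (hint.mono_measure (Measure.prod_mono le_rfl Measure.restrict_le_self)) hΔx).tsum_eq

end CellAverages

section Slabs

variable {H h : ℝ → ℝ} {ε B : ℝ}

theorem abs_intervalIntegral_le_of_abs_le {f : ℝ → ℝ} {C : ℝ} (hf : ∀ t, |f t| ≤ C) (a b : ℝ) :
    |∫ t in a..b, f t| ≤ C * |b - a| := by
  simpa only [Real.norm_eq_abs] using
    intervalIntegral.norm_integral_le_of_norm_le_const fun t _ =>
      (Real.norm_eq_abs _).trans_le (hf t)

theorem abs_integral_sub_integral_le_of_subinterval (hH : Integrable H) (hh : Integrable h)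
    (hHh : ∀ t, |H t - h t| ≤ ε) (hB : ∀ t, |h t| ≤ B) {a b τ τ' Δ T : ℝ} (hτa : τ ≤ a)
    (haτ : a ≤ τ + Δ) (hab : a ≤ b) (hbτ' : b ≤ τ') (hτ'b : τ' ≤ b + Δ) (hbT : b - a ≤ T) :
    |(∫ t in a..b, H t) - ∫ t in τ..τ', h t| ≤ T * ε + 2 * B * Δ := by
  have hε : 0 ≤ ε := (abs_nonneg _).trans (hHh 0)
  have hB0 : 0 ≤ B := (abs_nonneg _).trans (hB 0)
  have hsplit : ∫ t in τ..τ', h t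
      = (∫ t in τ..a, h t) + (∫ t in a..b, h t) + ∫ t in b..τ', h t := by
    rw [intervalIntegral.integral_add_adjacent_intervals hh.intervalIntegrable
        hh.intervalIntegrable,
      intervalIntegral.integral_add_adjacent_intervals hh.intervalIntegrable
        hh.intervalIntegrable]
  have hmid : |(∫ t in a..b, H t) - ∫ t in a..b, h t| ≤ T * ε := by
    rw [← intervalIntegral.integral_sub hH.intervalIntegrable hh.intervalIntegrable]
    calc _ ≤ ε * |b - a| := abs_intervalIntegral_le_of_abs_le hHh a b
      _ ≤ T * ε := by rw [abs_of_nonneg (by linarith), mul_comm]; gcongr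
  have hleft : |∫ t in τ..a, h t| ≤ B * Δ :=
    (abs_intervalIntegral_le_of_abs_le hB τ a).trans
      (by gcongr; rw [abs_le]; constructor <;> linarith)
  have hright : |∫ t in b..τ', h t| ≤ B * Δ :=
    (abs_intervalIntegral_le_of_abs_le hB b τ').trans
      (by gcongr; rw [abs_le]; constructor <;> linarith)
  rw [hsplit]
  rw [abs_le] at hmid hleft hright ⊢
  constructor <;> linarith [hmid.1, hmid.2, hleft.1, hleft.2, hright.1, hright.2]

theorem abs_sum_integral_slabs_sub_integral_le (hH : Integrable H) (hh : Integrable h)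
    (hHh : ∀ t, |H t - h t| ≤ ε) (hB : ∀ t, |h t| ≤ B) {Δ T τ τ' : ℝ} (hΔ : 0 < Δ) {p m : ℕ}
    (hpm : p ≤ m) (hτ : τ ∈ Ico (p * Δ) ((p + 1) * Δ)) (hτ' : τ' ∈ Ico (m * Δ) ((m + 1) * Δ))
    (hτ'T : τ' ≤ T) :
    |(∑ n ∈ Finset.Icc (p + 1) (m - 1), ∫ t in (n * Δ)..((n + 1) * Δ), H t)
        - ∫ t in τ..τ', h t| ≤ T * ε + 2 * B * Δ := by
  have hm0 : (0 : ℝ) ≤ m * Δ := by positivity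
  obtain rfl | hlt := hpm.eq_or_lt
  · rw [Finset.Icc_eq_empty (by omega), Finset.sum_empty, zero_sub, abs_neg]
    have hε : 0 ≤ ε := (abs_nonneg _).trans (hHh 0)
    have hB0 : 0 ≤ B := (abs_nonneg _).trans (hB 0)
    calc |∫ t in τ..τ', h t| ≤ B * |τ' - τ| := abs_intervalIntegral_le_of_abs_le hB τ τ'
      _ ≤ B * Δ := by gcongr; rw [abs_le]; constructor <;> linarith [hτ.1, hτ.2, hτ'.1, hτ'.2]
      _ ≤ T * ε + 2 * B * Δ := by nlinarith [mul_nonneg (hm0.trans (hτ'.1.trans hτ'T)) hε]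
  · have hIcc : Finset.Icc (p + 1) (m - 1) = Finset.Ico (p + 1) m := by
      ext n; simp only [Finset.mem_Icc, Finset.mem_Ico]; omega
    have hsum := intervalIntegral.sum_integral_adjacent_intervals_Ico (a := fun n : ℕ => n * Δ)
      (f := H) hlt fun _ _ => hH.intervalIntegrable
    push_cast at hsum
    have hpm' : ((p : ℝ) + 1) * Δ ≤ m * Δ := by gcongr; exact_mod_cast hlt
    rw [hIcc, hsum]
    exact abs_integral_sub_integral_le_of_subinterval hH hh hHh hB hτ.2.le (by linarith [hτ.1])
      hpm' hτ'.1 (by linarith [hτ'.2]) (by nlinarith [hτ'.1, hτ'T])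

end Slabs

theorem stmt_18_general
    (T R Δx Δt k τ τ' N1 N2 : ℝ)
    (hΔx : 0 < Δx) (hΔt : 0 < Δt)
    (hk : k ∈ Icc (0:ℝ) R)
    (p m : ℕ) (hpm : p ≤ m)
    (hτ : τ ∈ Ico ((p : ℝ) * Δt) (((p : ℝ) + 1) * Δt))
    (hτ' : τ' ∈ Ico ((m : ℝ) * Δt) (((m : ℝ) + 1) * Δt))
    (hτ'T : τ' ≤ T)
    (ρ : ℕ → ℤ → ℝ) (hρbd : ∀ n j, ρ n j ∈ Icc 0 R)
    (ρΔ : ℝ → ℝ → ℝ)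
    (hρΔ : ∀ x t, ρΔ x t = ρ (⌊t/Δt⌋.toNat) ⌊x/Δx⌋)
    (φ : ℝ → ℝ → ℝ)
    (hφ : ContDiff ℝ (⊤ : ℕ∞) (Function.uncurry φ))
    (hφsupp : HasCompactSupport (Function.uncurry φ))
    (hN1 : ∀ t : ℝ, (∫ x, |deriv (φ x) t|) ≤ N1)
    (hN2 : ∀ t : ℝ, (∫ x, |deriv (deriv (φ x)) t|) ≤ N2)
    (φavg : ℕ → ℤ → ℝ)
    (hφavg : ∀ (n : ℕ) (j : ℤ),
      φavg n j = (1/(Δx*Δt)) *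
        ∫ t in ((n : ℝ) * Δt)..(((n : ℝ) + 1) * Δt),
          ∫ x in ((j : ℝ) * Δx)..(((j : ℝ) + 1) * Δx), φ x t) :
    |(∑ n ∈ Finset.Icc (p+1) (m-1), ∑' j : ℤ,
        |ρ n j - k| * (φavg n j - φavg (n-1) j) * Δx)
      - ∫ t in τ..τ', ∫ x, |ρΔ x t - k| * deriv (φ x) t|
    ≤ R * (T * N2 + 2 * N1) * Δt := by
  set f := Function.uncurry φ
  have hf : ContDiff ℝ 2 f := hφ.of_le (WithTop.coe_le_coe.2 le_top)
  have hf1 : ContDiff ℝ 1 (timeDeriv f) := hf.timeDeriv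
  simp only [hρΔ, deriv_eq_timeDeriv (hf.differentiable two_ne_zero)] at hN1 ⊢
  simp only [deriv_deriv_eq_timeDeriv_timeDeriv hf] at hN2
  set w : ℝ → ℝ → ℝ := fun x t => |ρ ⌊t / Δt⌋.toNat ⌊x / Δx⌋ - k|
  have hw : Measurable (Function.uncurry w) := measurable_grid (fun n j => |ρ n j - k|) Δx Δt
  have hwR : ∀ x t, |w x t| ≤ R := fun x t => by
    rw [abs_abs]
    exact abs_sub_le_of_nonneg_of_le (hρbd _ _).1 (hρbd _ _).2 hk.1 hk.2
  have hquot_int := integrable_weight_mul hw hwR (hf.continuous.backwardDiffQuot Δt)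
    (hφsupp.backwardDiffQuot Δt)
  have hslab : ∀ n ∈ Finset.Icc (p + 1) (m - 1),
      ∑' j : ℤ, |ρ n j - k| * (φavg n j - φavg (n - 1) j) * Δx
        = ∫ t in (n * Δt)..((n + 1) * Δt), ∫ x, w x t * backwardDiffQuot Δt f (x, t) :=
    fun n hn => tsum_mul_cellAvg_sub_eq_integral hφ.continuous hΔx hΔt hφavg
      (fun n j t ht x hx => grid_eq_of_mem_Ico (fun n j => |ρ n j - k|) hΔx hΔt ht hx)
      hquot_int (by rw [Finset.mem_Icc] at hn; omega)
  rw [Finset.sum_congr rfl hslab]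
  calc _ ≤ T * (R * (Δt * N2)) + 2 * (R * N1) * Δt :=
        abs_sum_integral_slabs_sub_integral_le hquot_int.integral_prod_right
          (integrable_weight_mul hw hwR hf1.continuous hφsupp.timeDeriv).integral_prod_right
          (abs_integral_weight_mul_backwardDiffQuot_sub_le hw hwR hf hφsupp hN2 hΔt)
          (fun t => abs_integral_weight_mul_le hwR
            (hf1.continuous.integrable_comp_prodMk_left hφsupp.timeDeriv t) (hN1 t))
          hΔt hpm hτ hτ' hτ'T
    _ = R * (T * N2 + 2 * N1) * Δt := by ring

/-- Quadrature estimate for the term `A` in the approximate entropy inequality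
(Section 3): with `φ_{j+1/2}^n` the cell averages of a nonnegative test function `φ` and
`ρ_Δ` the piecewise constant grid function with values in `[0,R]`,
`A = ∑_{n=p+1}^{m−1} ∑_j |ρ_{j+1/2}^n − k|(φ_{j+1/2}^n − φ_{j+1/2}^{n−1})Δx` satisfies
`|A − ∫_τ^{τ'}∫_ℝ |ρ_Δ − k| ∂ₜφ dx dt| ≤ R(T‖∂²_{tt}φ‖_{L∞_t L¹_x} +
2‖∂ₜφ‖_{L∞_t L¹_x})Δt`; this is the error of size `c₁(Δt + Δx)` coming from summing the
discrete entropy inequalities against the cell averages of `φ`. -/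
theorem stmt_18
    (T R Δx Δt k τ τ' N1 N2 : ℝ)
    (hT : 0 < T) (hR : 0 < R) (hΔx : 0 < Δx) (hΔt : 0 < Δt)
    (hk : k ∈ Icc (0:ℝ) R)
    (p m : ℕ) (hpm : p ≤ m)
    (hτ : τ ∈ Ico ((p : ℝ) * Δt) (((p : ℝ) + 1) * Δt))
    (hτ' : τ' ∈ Ico ((m : ℝ) * Δt) (((m : ℝ) + 1) * Δt))
    (hττ' : τ ≤ τ') (hτ'T : τ' ≤ T)
    (ρ : ℕ → ℤ → ℝ) (hρbd : ∀ n j, ρ n j ∈ Icc 0 R)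
    (ρΔ : ℝ → ℝ → ℝ)
    (hρΔ : ∀ x t, ρΔ x t = ρ (⌊t/Δt⌋.toNat) ⌊x/Δx⌋)
    (φ : ℝ → ℝ → ℝ)
    (hφ : ContDiff ℝ (⊤ : ℕ∞) (Function.uncurry φ))
    (hφsupp : HasCompactSupport (Function.uncurry φ))
    (hφpos : ∀ x t, 0 ≤ φ x t)
    (hN1 : ∀ t : ℝ, (∫ x, |deriv (φ x) t|) ≤ N1)
    (hN2 : ∀ t : ℝ, (∫ x, |deriv (deriv (φ x)) t|) ≤ N2)
    (φavg : ℕ → ℤ → ℝ)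
    (hφavg : ∀ (n : ℕ) (j : ℤ),
      φavg n j = (1/(Δx*Δt)) *
        ∫ t in ((n : ℝ) * Δt)..(((n : ℝ) + 1) * Δt),
          ∫ x in ((j : ℝ) * Δx)..(((j : ℝ) + 1) * Δx), φ x t) :
    |(∑ n ∈ Finset.Icc (p+1) (m-1), ∑' j : ℤ,
        |ρ n j - k| * (φavg n j - φavg (n-1) j) * Δx)
      - ∫ t in τ..τ', ∫ x, |ρΔ x t - k| * deriv (φ x) t|
    ≤ R * (T * N2 + 2 * N1) * Δt :=
  stmt_18_general T R Δx Δt k τ τ' N1 N2 hΔx hΔt hk p m hpm hτ hτ' hτ'T ρ hρbd ρΔ hρΔ φ hφ hφsupp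
    hN1 hN2 φavg hφavg
end
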